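/- arXiv:cs/0607098 — 11 statements merged into one kernel-verified Lean document; each statement's English description precedes it below -/
import Mathlib

section
/- For every α in 𝔽(2ⁿ), the n×n matrix over 𝔽(2ⁿ) whose (j,k) entry (0 ≤ j,k < n) is Σ_{0≤m<n} (α·ξ^{j+k})^{2^m} factors as Vᵀ·D_α·V, where V is the n×n matrix over 𝔽(2ⁿ) with (m,j) entry ξ^{2^m·j} and D_α is the diagonal matrix diag(α, α², α⁴, …, α^{2^{n−1}}). In particular, the trace-Kerdock matrix K_α, with its ℤ₂-entries viewed as elements of 𝔽(2ⁿ), equals Vᵀ·D_α·V. -/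
open Matrix

/-- For every α in 𝔽(2ⁿ) = ℤ₂[t]/(h), the n×n matrix over 𝔽(2ⁿ) whose
(j,k) entry is Σ_{m<n} (α·ξ^{j+k})^{2^m} factors as Vᵀ·D_α·V, where V has (m,j) entry
ξ^{2^m·j} and D_α = diag(α, α², …, α^{2^{n−1}}).  In particular the trace-Kerdock matrix
K_α, with its ℤ₂ entries viewed in 𝔽(2ⁿ), equals Vᵀ·D_α·V. -/
theorem stmt_0 (n : ℕ) (hn : 1 ≤ n) (h : Polynomial (ZMod 2))
    (hmonic : h.Monic) (hdeg : h.natDegree = n) (hirr : Irreducible h)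
    (hprim : orderOf (AdjoinRoot.root h) = 2 ^ n - 1)
    (α : AdjoinRoot h)
    (K : Matrix (Fin n) (Fin n) (ZMod 2))
    (hK : ∀ j k : Fin n, algebraMap (ZMod 2) (AdjoinRoot h) (K j k)
        = ∑ m ∈ Finset.range n, (α * (AdjoinRoot.root h) ^ ((j : ℕ) + (k : ℕ))) ^ (2 ^ m)) :
    (Matrix.of fun j k : Fin n =>
        ∑ m ∈ Finset.range n, (α * (AdjoinRoot.root h) ^ ((j : ℕ) + (k : ℕ))) ^ (2 ^ m))
      = (Matrix.of fun m j : Fin n => (AdjoinRoot.root h) ^ (2 ^ (m : ℕ) * (j : ℕ)))ᵀ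
        * Matrix.diagonal (fun m : Fin n => α ^ (2 ^ (m : ℕ)))
        * (Matrix.of fun m j : Fin n => (AdjoinRoot.root h) ^ (2 ^ (m : ℕ) * (j : ℕ)))
    ∧ K.map (algebraMap (ZMod 2) (AdjoinRoot h))
      = (Matrix.of fun m j : Fin n => (AdjoinRoot.root h) ^ (2 ^ (m : ℕ) * (j : ℕ)))ᵀ
        * Matrix.diagonal (fun m : Fin n => α ^ (2 ^ (m : ℕ)))
        * (Matrix.of fun m j : Fin n => (AdjoinRoot.root h) ^ (2 ^ (m : ℕ) * (j : ℕ))) := by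
  have main : (Matrix.of fun j k : Fin n =>
        ∑ m ∈ Finset.range n, (α * (AdjoinRoot.root h) ^ ((j : ℕ) + (k : ℕ))) ^ (2 ^ m))
      = (Matrix.of fun m j : Fin n => (AdjoinRoot.root h) ^ (2 ^ (m : ℕ) * (j : ℕ)))ᵀ
        * Matrix.diagonal (fun m : Fin n => α ^ (2 ^ (m : ℕ)))
        * (Matrix.of fun m j : Fin n => (AdjoinRoot.root h) ^ (2 ^ (m : ℕ) * (j : ℕ))) := by
    ext j k
    simp only [Matrix.mul_apply, Matrix.of_apply, Matrix.transpose_apply,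
      Matrix.diagonal_apply, mul_ite, mul_zero, Finset.sum_ite_eq', Finset.mem_univ, if_true]
    rw [← Fin.sum_univ_eq_sum_range
      (fun m => (α * (AdjoinRoot.root h) ^ ((j : ℕ) + (k : ℕ))) ^ (2 ^ m))]
    refine Finset.sum_congr rfl fun m _ => ?_
    rw [mul_pow, ← pow_mul, Nat.add_mul, pow_add,
      Nat.mul_comm (j : ℕ), Nat.mul_comm (k : ℕ)]
    ring
  refine ⟨main, ?_⟩
  rw [← main]
  ext j k
  rw [Matrix.map_apply, Matrix.of_apply]
  exact hK j k
end

section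
/- The set {K_α : α ∈ 𝔽(2ⁿ)} of trace-Kerdock matrices is a Kerdock set of maximal size: it consists of exactly 2ⁿ symmetric n×n matrices over ℤ₂, it contains the zero matrix, and for any two distinct elements K_α ≠ K_β the matrix K_α + K_β (sum over ℤ₂) has full rank n. -/
/-!
The entry `∑ᵢ x ^ 2 ^ i` of `K_α` is the field trace of `x = α ξ ^ (j + k)` to `ℤ₂`, so `K_α` is
the Gram matrix, in the power basis `1, ξ, …, ξ ^ (n - 1)`, of the bilinear form
`(x, y) ↦ Tr (α x y)`. For `α ≠ 0` this form is nondegenerate because the trace form of a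
separable extension is, so `K_α` is invertible. As `α ↦ K_α` is `ℤ₂`-linear, it is injective and
`K_α + K_β = K_{α + β}` has full rank whenever `α ≠ β`.
-/

open Matrix

section TraceKerdock

variable (K : Type*) {L : Type*} [Field K] [Field L] [Algebra K L]

noncomputable def traceKerdockMatrix (ξ : L) (n : ℕ) : L →ₗ[K] Matrix (Fin n) (Fin n) K where
  toFun α := Matrix.of fun j k => Algebra.trace K L (α * ξ ^ ((j : ℕ) + k))
  map_add' α β := by ext; simp [add_mul]
  map_smul' c α := by ext; simp

noncomputable def traceMulForm (α : L) : LinearMap.BilinForm K L :=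
  Algebra.traceForm K L ∘ₗ LinearMap.mulLeft K α

variable {K}

theorem traceKerdockMatrix_apply (ξ : L) (n : ℕ) (α : L) (j k : Fin n) :
    traceKerdockMatrix K ξ n α j k = Algebra.trace K L (α * ξ ^ ((j : ℕ) + k)) := rfl

theorem traceKerdockMatrix_isSymm (ξ : L) (n : ℕ) (α : L) :
    (traceKerdockMatrix K ξ n α).IsSymm := by
  ext j k
  simp only [transpose_apply, traceKerdockMatrix_apply, add_comm]

theorem traceMulForm_apply (α x y : L) :
    traceMulForm K α x y = Algebra.trace K L (α * x * y) := rfl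

theorem toMatrix_traceMulForm (pb : PowerBasis K L) (α : L) :
    LinearMap.BilinForm.toMatrix pb.basis (traceMulForm K α) =
      traceKerdockMatrix K pb.gen pb.dim α := by
  ext j k
  rw [LinearMap.BilinForm.toMatrix_apply, traceMulForm_apply, traceKerdockMatrix_apply,
    pb.coe_basis, mul_assoc, pow_add]

theorem traceMulForm_separatingLeft [FiniteDimensional K L] [Algebra.IsSeparable K L] {α : L}
    (hα : α ≠ 0) : (traceMulForm K α).SeparatingLeft := fun x hx =>
  (mul_eq_zero.mp ((traceForm_nondegenerate K L).1 (α * x) hx)).resolve_left hα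

variable [Algebra.IsSeparable K L] (pb : PowerBasis K L)

theorem det_traceKerdockMatrix_ne_zero {α : L} (hα : α ≠ 0) :
    (traceKerdockMatrix K pb.gen pb.dim α).det ≠ 0 := by
  have := pb.finite
  rw [← toMatrix_traceMulForm, ← Matrix.separatingLeft_iff_det_ne_zero,
    LinearMap.BilinForm.separatingLeft_toMatrix_iff]
  exact traceMulForm_separatingLeft hα

theorem rank_traceKerdockMatrix {α : L} (hα : α ≠ 0) :
    (traceKerdockMatrix K pb.gen pb.dim α).rank = pb.dim := by
  simpa using rank_of_isUnit _ ((isUnit_iff_isUnit_det _).mpr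
    (det_traceKerdockMatrix_ne_zero pb hα).isUnit)

theorem traceKerdockMatrix_injective :
    Function.Injective (traceKerdockMatrix K pb.gen pb.dim) := by
  refine (injective_iff_map_eq_zero _).mpr fun α hα => ?_
  by_contra hne
  have : Nonempty (Fin pb.dim) := ⟨⟨0, pb.dim_pos⟩⟩
  exact det_traceKerdockMatrix_ne_zero pb hne (hα ▸ det_zero)

end TraceKerdock

theorem range_traceKerdockMatrix_eq_setOf_sum_pow (p : ℕ) [Fact p.Prime] {L : Type*} [Field L]
    [Algebra (ZMod p) L] (pb : PowerBasis (ZMod p) L) :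
    Set.range (traceKerdockMatrix (ZMod p) pb.gen pb.dim) =
      {P | ∃ α : L, ∀ j k : Fin pb.dim, algebraMap (ZMod p) L (P j k) =
        ∑ i ∈ Finset.range pb.dim, (α * pb.gen ^ ((j : ℕ) + (k : ℕ))) ^ (p ^ i)} := by
  have := pb.finite
  have := Module.finite_of_finite (ZMod p) (M := L)
  have hsum (x : L) : ∑ i ∈ Finset.range pb.dim, x ^ p ^ i =
      algebraMap (ZMod p) L (Algebra.trace (ZMod p) L x) := by
    rw [FiniteField.algebraMap_trace_eq_sum_pow, Nat.card_zmod, pb.finrank]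
  ext P
  refine exists_congr fun α => Iff.trans Matrix.ext_iff.symm (forall₂_congr fun j k => ?_)
  rw [traceKerdockMatrix_apply, hsum, (algebraMap (ZMod p) L).injective.eq_iff, eq_comm]

def IsKerdockSet {n : ℕ} (S : Set (Matrix (Fin n) (Fin n) (ZMod 2))) : Prop :=
  (∀ P ∈ S, P.IsSymm) ∧ 0 ∈ S ∧ ∀ P₁ ∈ S, ∀ P₂ ∈ S, P₁ ≠ P₂ → (P₁ + P₂).rank = n

section Binary

variable {L : Type*} [Field L] [Algebra (ZMod 2) L] (pb : PowerBasis (ZMod 2) L)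

theorem isKerdockSet_range_traceKerdockMatrix :
    IsKerdockSet (Set.range (traceKerdockMatrix (ZMod 2) pb.gen pb.dim)) := by
  -- `L` is then finite, hence separable over the perfect field `ZMod 2`
  have := pb.finite
  refine ⟨?_, ⟨0, map_zero _⟩, ?_⟩
  · rintro _ ⟨α, rfl⟩
    exact traceKerdockMatrix_isSymm _ _ α
  · rintro _ ⟨α, rfl⟩ _ ⟨β, rfl⟩ hne
    rw [← map_add, ← ZModModule.sub_eq_add]
    exact rank_traceKerdockMatrix pb (sub_ne_zero.mpr (ne_of_apply_ne _ hne))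

theorem card_range_traceKerdockMatrix :
    Nat.card (Set.range (traceKerdockMatrix (ZMod 2) pb.gen pb.dim)) = 2 ^ pb.dim := by
  have := pb.finite
  rw [Nat.card_range_of_injective (traceKerdockMatrix_injective pb),
    Module.natCard_eq_pow_finrank (K := ZMod 2), Nat.card_zmod, pb.finrank]

end Binary

theorem stmt_4_general (n : ℕ) (h : Polynomial (ZMod 2))
    (hdeg : h.natDegree = n) (hirr : Irreducible h)
    (S : Set (Matrix (Fin n) (Fin n) (ZMod 2)))
    (hS : S = {K | ∃ α : AdjoinRoot h, ∀ j k : Fin n,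
        algebraMap (ZMod 2) (AdjoinRoot h) (K j k)
          = ∑ i ∈ Finset.range n, (α * (AdjoinRoot.root h) ^ ((j : ℕ) + (k : ℕ))) ^ (2 ^ i)}) :
    Nat.card S = 2 ^ n
    ∧ (∀ K ∈ S, K.IsSymm)
    ∧ 0 ∈ S
    ∧ (∀ K₁ ∈ S, ∀ K₂ ∈ S, K₁ ≠ K₂ → (K₁ + K₂).rank = n) := by
  have : Fact (Irreducible h) := ⟨hirr⟩
  subst hdeg
  let pb := AdjoinRoot.powerBasis hirr.ne_zero
  obtain rfl : S = Set.range (traceKerdockMatrix (ZMod 2) pb.gen pb.dim) :=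
    hS.trans (range_traceKerdockMatrix_eq_setOf_sum_pow 2 pb).symm
  exact ⟨card_range_traceKerdockMatrix pb, isKerdockSet_range_traceKerdockMatrix pb⟩

/-- The set {K_α : α ∈ 𝔽(2ⁿ)} of trace-Kerdock matrices is a Kerdock set of
maximal size: it has exactly 2ⁿ elements, all its elements are symmetric n×n matrices
over ℤ₂, it contains the zero matrix, and for any two distinct elements K_α ≠ K_β the
sum K_α + K_β (over ℤ₂) has full rank n. -/
theorem stmt_4 (n : ℕ) (hn : 1 ≤ n) (h : Polynomial (ZMod 2))
    (hmonic : h.Monic) (hdeg : h.natDegree = n) (hirr : Irreducible h)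
    (hprim : orderOf (AdjoinRoot.root h) = 2 ^ n - 1)
    (S : Set (Matrix (Fin n) (Fin n) (ZMod 2)))
    (hS : S = {K | ∃ α : AdjoinRoot h, ∀ j k : Fin n,
        algebraMap (ZMod 2) (AdjoinRoot h) (K j k)
          = ∑ i ∈ Finset.range n, (α * (AdjoinRoot.root h) ^ ((j : ℕ) + (k : ℕ))) ^ (2 ^ i)}) :
    Nat.card S = 2 ^ n
    ∧ (∀ K ∈ S, K.IsSymm)
    ∧ 0 ∈ S
    ∧ (∀ K₁ ∈ S, ∀ K₂ ∈ S, K₁ ≠ K₂ → (K₁ + K₂).rank = n) :=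
  stmt_4_general n h hdeg hirr S hS
end

section
/- The matrix K₁ (the trace-Kerdock matrix for α = 1) is invertible over ℤ₂; writing J = K₁⁻¹, the map x ↦ K_x·J from 𝔽(2ⁿ) to n×n matrices over ℤ₂ is an injective ring homomorphism: K_{x+y}·J = K_x·J + K_y·J, (K_x·J)·(K_y·J) = K_{xy}·J for all x, y ∈ 𝔽(2ⁿ), and K₁·J is the identity matrix. -/
/-!
By the explicit formula for the trace of a finite field, `K x` has entries `tr (x * ξʲ * ξᵏ)`
with `ξʲ` running through the power basis `b`. Expanding `x * ξʲ` in `b` gives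
`K x = (leftMulMatrix b x)ᵀ * traceMatrix b`; in particular `K 1` is the Gram matrix of the
trace form, which is nondegenerate because `𝔽(2ⁿ)/ℤ₂` is separable. Hence `K x * (K 1)⁻¹` is
the transposed regular representation `x ↦ (leftMulMatrix b x)ᵀ`, an injective ring
homomorphism since the field is commutative.
-/

open Matrix

namespace Algebra

variable {A B ι : Type*} [CommRing A] [CommRing B] [Algebra A B] [Fintype ι] [DecidableEq ι]

theorem trace_mul_basis_mul_basis (b : Module.Basis ι A B) (x : B) (j k : ι) :
    trace A B (x * b j * b k) = ((leftMulMatrix b x)ᵀ * traceMatrix A b) j k := by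
  have hx : x * b j = ∑ i, leftMulMatrix b x i j • b i := by
    simp only [leftMulMatrix_eq_repr_mul, b.sum_repr]
  simp only [hx, Finset.sum_mul, map_sum, smul_mul_assoc, map_smul, mul_apply, transpose_apply,
    traceMatrix_apply, traceForm_apply, smul_eq_mul]

end Algebra

theorem stmt_5_general (n : ℕ) (h : Polynomial (ZMod 2))
    (hdeg : h.natDegree = n) (hirr : Irreducible h)
    (K : AdjoinRoot h → Matrix (Fin n) (Fin n) (ZMod 2))
    (hK : ∀ (x : AdjoinRoot h) (j k : Fin n),
        algebraMap (ZMod 2) (AdjoinRoot h) (K x j k)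
          = ∑ i ∈ Finset.range n, (x * (AdjoinRoot.root h) ^ ((j : ℕ) + (k : ℕ))) ^ (2 ^ i)) :
    IsUnit (K 1)
    ∧ K 1 * (K 1)⁻¹ = 1
    ∧ (∀ x y : AdjoinRoot h, K (x + y) * (K 1)⁻¹ = K x * (K 1)⁻¹ + K y * (K 1)⁻¹)
    ∧ (∀ x y : AdjoinRoot h, (K x * (K 1)⁻¹) * (K y * (K 1)⁻¹) = K (x * y) * (K 1)⁻¹)
    ∧ Function.Injective (fun x : AdjoinRoot h => K x * (K 1)⁻¹) := by
  have := Fact.mk hirr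
  let b := (AdjoinRoot.powerBasis hirr.ne_zero).basis.reindex (finCongr hdeg)
  have hb (j : Fin n) : b j = AdjoinRoot.root h ^ (j : ℕ) := by simp [b, finCongr]
  have := Module.Finite.of_basis b
  have := Module.finite_of_finite (ZMod 2) (M := AdjoinRoot h)
  have hrank : Module.finrank (ZMod 2) (AdjoinRoot h) = n := by
    simp [Module.finrank_eq_card_basis b]
  have hKb (x : AdjoinRoot h) :
      K x = (Algebra.leftMulMatrix b x)ᵀ * Algebra.traceMatrix (ZMod 2) b := by
    ext j k
    rw [← Algebra.trace_mul_basis_mul_basis]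
    apply (algebraMap (ZMod 2) (AdjoinRoot h)).injective
    rw [hK, FiniteField.algebraMap_trace_eq_sum_pow, hrank, Nat.card_zmod, hb, hb, mul_assoc,
      pow_add]
  have hdet : IsUnit (Algebra.traceMatrix (ZMod 2) b).det := by
    rw [isUnit_iff_ne_zero, Algebra.traceMatrix_of_basis]
    exact det_traceForm_ne_zero b
  have hK1 : K 1 = Algebra.traceMatrix (ZMod 2) b := by simp [hKb]
  have hJ (x : AdjoinRoot h) : K x * (K 1)⁻¹ = (Algebra.leftMulMatrix b x)ᵀ := by
    rw [hKb x, hK1, mul_assoc, mul_nonsing_inv _ hdet, mul_one]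
  have hunit : IsUnit (K 1) := hK1 ▸ (isUnit_iff_isUnit_det _).mpr hdet
  refine ⟨hunit, hK1 ▸ mul_nonsing_inv _ hdet, ?_, ?_, ?_⟩
  · simp [hJ]
  · intro x y
    rw [hJ, hJ, hJ, ← transpose_mul, ← map_mul, mul_comm]
  · intro x y hxy
    exact Algebra.leftMulMatrix_injective b (transpose_injective (by simpa [hJ] using hxy))

/-- The matrix K₁ (trace-Kerdock matrix for α = 1) is invertible over ℤ₂;
writing J = K₁⁻¹, the map x ↦ K_x·J from 𝔽(2ⁿ) to n×n matrices over ℤ₂ is an injective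
ring homomorphism: K_{x+y}·J = K_x·J + K_y·J, (K_x·J)·(K_y·J) = K_{xy}·J, and
K₁·J is the identity matrix. -/
theorem stmt_5 (n : ℕ) (hn : 1 ≤ n) (h : Polynomial (ZMod 2))
    (hmonic : h.Monic) (hdeg : h.natDegree = n) (hirr : Irreducible h)
    (hprim : orderOf (AdjoinRoot.root h) = 2 ^ n - 1)
    (K : AdjoinRoot h → Matrix (Fin n) (Fin n) (ZMod 2))
    (hK : ∀ (x : AdjoinRoot h) (j k : Fin n),
        algebraMap (ZMod 2) (AdjoinRoot h) (K x j k)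
          = ∑ i ∈ Finset.range n, (x * (AdjoinRoot.root h) ^ ((j : ℕ) + (k : ℕ))) ^ (2 ^ i)) :
    IsUnit (K 1)
    ∧ K 1 * (K 1)⁻¹ = 1
    ∧ (∀ x y : AdjoinRoot h, K (x + y) * (K 1)⁻¹ = K x * (K 1)⁻¹ + K y * (K 1)⁻¹)
    ∧ (∀ x y : AdjoinRoot h, (K x * (K 1)⁻¹) * (K y * (K 1)⁻¹) = K (x * y) * (K 1)⁻¹)
    ∧ Function.Injective (fun x : AdjoinRoot h => K x * (K 1)⁻¹) :=
  stmt_5_general n h hdeg hirr K hK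
end

section
/- Let P be a symmetric n×n matrix over ℤ₂. Then the following two conditions are equivalent: (i) for all r, s ∈ 𝔽(2ⁿ), [r]ᵀP[s] = [√(rs)]ᵀP[√(rs)], where √u = u^{2^{n−1}} is the square root in 𝔽(2ⁿ); (ii) for all x, y, z ∈ 𝔽(2ⁿ), [x]ᵀP[yz] = [xy]ᵀP[z]. -/
open Matrix

/-- Let P be a symmetric n×n matrix over ℤ₂, and let [x] ∈ ℤ₂ⁿ denote the
coordinate vector of x ∈ 𝔽(2ⁿ) with respect to the basis {1, ξ, …, ξ^{n−1}}.  Then the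
following are equivalent: (i) for all r, s ∈ 𝔽(2ⁿ), [r]ᵀP[s] = [√(rs)]ᵀP[√(rs)], where
√u = u^{2^{n−1}}; (ii) for all x, y, z ∈ 𝔽(2ⁿ), [x]ᵀP[yz] = [xy]ᵀP[z]. -/
theorem stmt_6 (n : ℕ) (hn : 1 ≤ n) (h : Polynomial (ZMod 2))
    (hmonic : h.Monic) (hdeg : h.natDegree = n) (hirr : Irreducible h)
    (hprim : orderOf (AdjoinRoot.root h) = 2 ^ n - 1)
    (coord : AdjoinRoot h → Fin n → ZMod 2)
    (hcoord : ∀ x : AdjoinRoot h,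
        x = ∑ j : Fin n,
          algebraMap (ZMod 2) (AdjoinRoot h) (coord x j) * (AdjoinRoot.root h) ^ (j : ℕ))
    (P : Matrix (Fin n) (Fin n) (ZMod 2)) (hP : P.IsSymm) :
    (∀ r s : AdjoinRoot h,
        coord r ⬝ᵥ P.mulVec (coord s)
          = coord ((r * s) ^ (2 ^ (n - 1))) ⬝ᵥ P.mulVec (coord ((r * s) ^ (2 ^ (n - 1)))))
    ↔ (∀ x y z : AdjoinRoot h,
        coord x ⬝ᵥ P.mulVec (coord (y * z)) = coord (x * y) ⬝ᵥ P.mulVec (coord z)) := by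
  haveI := Fact.mk hirr
  have hne : h ≠ 0 := hmonic.ne_zero
  have key : ∀ u : AdjoinRoot h, (u ^ (2 ^ (n - 1))) ^ 2 = u := by
    let pb := AdjoinRoot.powerBasis hne
    haveI : Module.Finite (ZMod 2) (AdjoinRoot h) := Module.Finite.of_basis pb.basis
    haveI : Finite (AdjoinRoot h) := Module.finite_of_finite (ZMod 2)
    haveI : Fintype (AdjoinRoot h) := Fintype.ofFinite _
    have hcard : Fintype.card (AdjoinRoot h) = 2 ^ n := by
      rw [Module.card_fintype pb.basis, ZMod.card]
      congr 1
      simp [AdjoinRoot.powerBasis, hdeg, pb]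
    intro u
    rw [← pow_mul]
    have : 2 ^ (n - 1) * 2 = 2 ^ n := by
      rw [← pow_succ, Nat.sub_add_cancel hn]
    rw [this, ← hcard, FiniteField.pow_card]
  constructor
  · intro hi x y z
    rw [hi x (y * z), hi (x * y) z, mul_assoc]
  · intro hii r s
    have h1 : ∀ a b : AdjoinRoot h,
        coord a ⬝ᵥ P.mulVec (coord b) = coord 1 ⬝ᵥ P.mulVec (coord (a * b)) := by
      intro a b
      have := hii 1 a b
      rw [one_mul] at this
      exact this.symm
    rw [h1 r s, h1 ((r * s) ^ (2 ^ (n - 1))) ((r * s) ^ (2 ^ (n - 1))), ← sq, key]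
end

section
/- Let P be a symmetric n×n matrix over ℤ₂. Then P is a trace-Kerdock matrix (i.e., there exists α ∈ 𝔽(2ⁿ) with P = K_α) if and only if for all x, y, z ∈ 𝔽(2ⁿ) one has [x]ᵀP[yz] = [xy]ᵀP[z]. -/
/-!
A bilinear form `B` on an algebra satisfies `B x (y * z) = B (x * y) z` exactly when it has the
shape `B x y = L (x * y)` for a linear functional `L` (take `L u = B u 1`). The matrix condition
says this for the form with Gram matrix `P` in the basis `1, ξ, …, ξ^(n-1)`, and the trace-Kerdock
condition says it with `L = tr(α * ·)`. Since the trace form of a finite field is nondegenerate,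
every functional is of this form, and the trace is `u ↦ ∑ i < n, u ^ 2 ^ i`.
-/

open Matrix

namespace LinearMap.BilinForm

variable {R A : Type*} [CommSemiring R] [Semiring A] [Algebra R A]

theorem exists_eq_dual_mul_iff (B : LinearMap.BilinForm R A) :
    (∃ L : Module.Dual R A, ∀ x y, B x y = L (x * y)) ↔ ∀ x y z, B x (y * z) = B (x * y) z := by
  constructor
  · rintro ⟨L, hL⟩ x y z
    rw [hL, hL, mul_assoc]
  · intro hB
    exact ⟨B.flip 1, fun x y => by simpa using hB x y 1⟩

end LinearMap.BilinForm

section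

variable {R M ι κ : Type*} [CommSemiring R] [AddCommMonoid M] [Module R M]
  [Fintype ι] [DecidableEq ι] [Fintype κ] [DecidableEq κ]

theorem Matrix.toLinearMap₂_apply_eq_dotProduct (b₁ : Module.Basis ι R M)
    (b₂ : Module.Basis κ R M) (P : Matrix ι κ R) (x y : M) :
    Matrix.toLinearMap₂ b₁ b₂ P x y = b₁.repr x ⬝ᵥ P *ᵥ b₂.repr y := by
  simpa only [LinearMap.toMatrix₂_toLinearMap₂, RingHom.coe_id, Function.id_comp] using
    apply_eq_dotProduct_toMatrix₂_mulVec b₁ b₂ (Matrix.toLinearMap₂ b₁ b₂ P) x y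

end

namespace Module.Basis

variable {R A ι : Type*} [CommSemiring R] [Semiring A] [Algebra R A] [Fintype ι] [DecidableEq ι]

theorem exists_eq_dual_mul_iff (b : Basis ι R A) (P : Matrix ι ι R) :
    (∃ L : Module.Dual R A, ∀ i j, P i j = L (b i * b j)) ↔
      ∀ x y z, b.repr x ⬝ᵥ P *ᵥ b.repr (y * z) = b.repr (x * y) ⬝ᵥ P *ᵥ b.repr z := by
  simp_rw [← Matrix.toLinearMap₂_apply_eq_dotProduct, ← LinearMap.BilinForm.exists_eq_dual_mul_iff]
  refine exists_congr fun L => ⟨fun hL => ?_, fun hL i j => ?_⟩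
  · have : Matrix.toLinearMap₂ b b P = (LinearMap.mul R A).compr₂ L :=
      LinearMap.ext_basis b b fun i j => by rw [Matrix.toLinearMap₂_apply_basis, hL]; rfl
    simp [this]
  · rw [← hL, Matrix.toLinearMap₂_apply_basis]

end Module.Basis

namespace Algebra

variable {F K : Type*} [Field F] [Field K] [Algebra F K] [FiniteDimensional F K]
  [Algebra.IsSeparable F K]

theorem exists_eq_trace_mul (L : Module.Dual F K) : ∃ α : K, ∀ u, L u = trace F K (α * u) :=
  ⟨((traceForm F K).toDual (traceForm_nondegenerate F K)).symm L, fun u => by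
    rw [← traceForm_apply, ← LinearMap.BilinForm.toDual_def (traceForm_nondegenerate F K),
      LinearEquiv.apply_symm_apply]⟩

theorem exists_eq_trace_mul_basis_iff {ι : Type*} [Fintype ι] [DecidableEq ι]
    (b : Module.Basis ι F K) (P : Matrix ι ι F) :
    (∃ α : K, ∀ i j, P i j = trace F K (α * (b i * b j))) ↔
      ∀ x y z, b.repr x ⬝ᵥ P *ᵥ b.repr (y * z) = b.repr (x * y) ⬝ᵥ P *ᵥ b.repr z := by
  rw [← b.exists_eq_dual_mul_iff]
  constructor
  · rintro ⟨α, hα⟩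
    exact ⟨(trace F K).comp (LinearMap.mulLeft F α), hα⟩
  · rintro ⟨L, hL⟩
    obtain ⟨α, hα⟩ := exists_eq_trace_mul L
    exact ⟨α, fun i j => (hL i j).trans (hα _)⟩

end Algebra

theorem stmt_7_general (n : ℕ) (h : Polynomial (ZMod 2))
    (hdeg : h.natDegree = n) (hirr : Irreducible h)
    (coord : AdjoinRoot h → Fin n → ZMod 2)
    (hcoord : ∀ x : AdjoinRoot h,
        x = ∑ j : Fin n,
          algebraMap (ZMod 2) (AdjoinRoot h) (coord x j) * (AdjoinRoot.root h) ^ (j : ℕ))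
    (P : Matrix (Fin n) (Fin n) (ZMod 2)) :
    (∃ α : AdjoinRoot h, ∀ j k : Fin n,
        algebraMap (ZMod 2) (AdjoinRoot h) (P j k)
          = ∑ i ∈ Finset.range n, (α * (AdjoinRoot.root h) ^ ((j : ℕ) + (k : ℕ))) ^ (2 ^ i))
    ↔ (∀ x y z : AdjoinRoot h,
        coord x ⬝ᵥ P.mulVec (coord (y * z)) = coord (x * y) ⬝ᵥ P.mulVec (coord z)) := by
  have : Fact (Irreducible h) := ⟨hirr⟩
  let b : Module.Basis (Fin n) (ZMod 2) (AdjoinRoot h) :=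
    (AdjoinRoot.powerBasis hirr.ne_zero).basis.reindex (finCongr (by simp [hdeg]))
  have hb (j : Fin n) : b j = AdjoinRoot.root h ^ (j : ℕ) := by simp [b]
  have hcoord_repr : coord = fun x => ⇑(b.repr x) := by
    funext x
    rw [← b.repr_sum_self (coord x)]
    conv_rhs => rw [hcoord x]
    simp only [Algebra.smul_def, hb]
  have : FiniteDimensional (ZMod 2) (AdjoinRoot h) := Module.Finite.of_basis b
  have : Finite (AdjoinRoot h) := Module.finite_of_finite (ZMod 2)
  have htrace (u : AdjoinRoot h) : algebraMap (ZMod 2) _ (Algebra.trace (ZMod 2) _ u) =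
      ∑ i ∈ Finset.range n, u ^ 2 ^ i := by
    rw [FiniteField.algebraMap_trace_eq_sum_pow, Module.finrank_eq_card_basis b, Nat.card_zmod,
      Fintype.card_fin]
  subst hcoord_repr
  rw [← Algebra.exists_eq_trace_mul_basis_iff b P]
  simp_rw [← htrace, (algebraMap (ZMod 2) (AdjoinRoot h)).injective.eq_iff, pow_add, hb]

/-- Let P be a symmetric n×n matrix over ℤ₂.  Then P is a trace-Kerdock
matrix (there exists α ∈ 𝔽(2ⁿ) with P = K_α, i.e. the entries of P viewed in 𝔽(2ⁿ) are
tr(α·ξ^{j+k})) if and only if for all x, y, z ∈ 𝔽(2ⁿ) one has [x]ᵀP[yz] = [xy]ᵀP[z],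
where [x] is the coordinate vector of x in the basis {1, ξ, …, ξ^{n−1}}. -/
theorem stmt_7 (n : ℕ) (hn : 1 ≤ n) (h : Polynomial (ZMod 2))
    (hmonic : h.Monic) (hdeg : h.natDegree = n) (hirr : Irreducible h)
    (hprim : orderOf (AdjoinRoot.root h) = 2 ^ n - 1)
    (coord : AdjoinRoot h → Fin n → ZMod 2)
    (hcoord : ∀ x : AdjoinRoot h,
        x = ∑ j : Fin n,
          algebraMap (ZMod 2) (AdjoinRoot h) (coord x j) * (AdjoinRoot.root h) ^ (j : ℕ))
    (P : Matrix (Fin n) (Fin n) (ZMod 2)) (hP : P.IsSymm) :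
    (∃ α : AdjoinRoot h, ∀ j k : Fin n,
        algebraMap (ZMod 2) (AdjoinRoot h) (P j k)
          = ∑ i ∈ Finset.range n, (α * (AdjoinRoot.root h) ^ ((j : ℕ) + (k : ℕ))) ^ (2 ^ i))
    ↔ (∀ x y z : AdjoinRoot h,
        coord x ⬝ᵥ P.mulVec (coord (y * z)) = coord (x * y) ⬝ᵥ P.mulVec (coord z)) :=
  stmt_7_general n h hdeg hirr coord hcoord P
end

section
/- The Kerdock code is (1/√N)-incoherent: for any α, β ∈ 𝔽(2ⁿ), ℓ, ℓ' ∈ ℤ₂ⁿ, and ε, ε' ∈ ℤ₄ with (α, ℓ) ≠ (β, ℓ'), the exponentiated codewords built from the trace-Kerdock matrices satisfy |⟨φ_{K_α,ℓ,ε}, φ_{K_β,ℓ',ε'}⟩| ≤ 2^{−n/2} = 1/√N. -/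
open Matrix

/-- The exponentiated ℤ₄-RM(2,n) codeword φ_{Q,ℓ,ε} ∈ ℂ^{2ⁿ}, indexed by y ∈ {0,1}ⁿ:
φ_{Q,ℓ,ε}(y) = 2^{-n/2}·i^{yᵀQy + 2ℓᵀy + ε}, entries lifted to {0,1} ⊆ ℤ. -/
noncomputable def rmPhi (n : ℕ) (Q : Matrix (Fin n) (Fin n) (ZMod 2))
    (ℓ : Fin n → ZMod 2) (ε : ZMod 4) (y : Fin n → ZMod 2) : ℂ :=
  (1 / Real.sqrt (2 ^ n)) *
    Complex.I ^ ((∑ j : Fin n, ∑ k : Fin n,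
        ((y j).val : ℤ) * ((Q j k).val : ℤ) * ((y k).val : ℤ))
      + 2 * ∑ j : Fin n, ((ℓ j).val : ℤ) * ((y j).val : ℤ) + (ε.val : ℤ))

/-- The Hermitian inner product ⟨u,v⟩ = Σ_y u(y)·conj(v(y)). -/
noncomputable def herm {ι : Type*} [Fintype ι] (u v : ι → ℂ) : ℂ :=
  ∑ y : ι, u y * (starRingEnd ℂ) (v y)

/-!
Write `ψ` for the character `a ↦ i^a` of `ℤ₄` and `K_γ` for the trace-Kerdock matrix of `γ`.
Then `⟨φ_{K_α,ℓ,ε}, φ_{K_β,ℓ',ε'}⟩ = N⁻¹ ∑_y ψ(D y)` where `D` is the difference of the two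
`ℤ₄`-exponents. Since the lift `ℤ₂ → {0,1} ⊆ ℤ₄` satisfies `⌜a + b⌝ = ⌜a⌝ + ⌜b⌝ - 2⌜a⌝⌜b⌝`,
`D (z + w) = D z + D w - D 0 + 2⌜zᵀ (K_α - K_β) w⌝`, so that `|∑_y ψ(D y)|²` is `N` times a sum
of `ψ(D w - D 0)` over the kernel of `K_α - K_β = K_{α-β}` (over `ℤ₂`). That kernel is trivial
for `α ≠ β`, because the trace form of `𝔽(2ⁿ)/ℤ₂` is nondegenerate, and the inner product then has
absolute value exactly `N^{-1/2}`. For `α = β` the sum is a nontrivial character sum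
`∑_y (-1)^{(ℓ - ℓ')ᵀ y}`, which vanishes.
-/

namespace Kerdock

open Finset

local notation "ψ" => ZMod.stdAddChar (N := 4)

lemma stdAddChar_one : ψ 1 = Complex.I := by
  rw [← Int.cast_one, ZMod.stdAddChar_coe]
  convert Complex.exp_pi_div_two_mul_I using 2
  push_cast
  ring

lemma stdAddChar_intCast (m : ℤ) : ψ m = Complex.I ^ m := by
  rw [← stdAddChar_one, ← AddChar.map_zsmul_eq_zpow, zsmul_one]

lemma conj_stdAddChar (a : ZMod 4) : starRingEnd ℂ (ψ a) = ψ (-a) :=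
  (AddChar.map_neg_eq_conj _ _).symm

def lift (a : ZMod 2) : ZMod 4 := a.val

lemma lift_add : ∀ a b : ZMod 2, lift (a + b) = lift a + lift b - 2 * (lift a * lift b) := by
  decide

lemma lift_mul : ∀ a b : ZMod 2, lift (a * b) = lift a * lift b := by decide

def twice : ZMod 2 →+ ZMod 4 where
  toFun a := 2 * lift a
  map_zero' := rfl
  map_add' := by decide

lemma twice_apply (a : ZMod 2) : twice a = 2 * lift a := rfl

lemma stdAddChar_twice_one : ψ (twice 1) = -1 := by
  rw [show twice 1 = ((2 : ℤ) : ZMod 4) from rfl, stdAddChar_intCast]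
  norm_num

section Exponent

variable {ι : Type*} [Fintype ι]

lemma dotProduct_mulVec_comm {R : Type*} [CommSemiring R] {M : Matrix ι ι R} (hM : M.IsSymm)
    (x y : ι → R) : x ⬝ᵥ M *ᵥ y = y ⬝ᵥ M *ᵥ x := by
  rw [dotProduct_mulVec, ← mulVec_transpose, hM.eq, dotProduct_comm]

def quadForm (Q : Matrix ι ι (ZMod 2)) (y : ι → ZMod 2) : ZMod 4 :=
  (lift ∘ y) ⬝ᵥ Q.map lift *ᵥ (lift ∘ y)

lemma twice_dotProduct_mulVec (Q : Matrix ι ι (ZMod 2)) (z w : ι → ZMod 2) :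
    twice (z ⬝ᵥ Q *ᵥ w) = 2 * ((lift ∘ z) ⬝ᵥ Q.map lift *ᵥ (lift ∘ w)) := by
  simp only [dotProduct, mulVec, map_sum, twice_apply, lift_mul, Finset.mul_sum,
    Function.comp_apply, Matrix.map_apply]

lemma quadForm_add {Q : Matrix ι ι (ZMod 2)} (hQ : Q.IsSymm) (z w : ι → ZMod 2) :
    quadForm Q (z + w) = quadForm Q z + quadForm Q w + twice (z ⬝ᵥ Q *ᵥ w) := by
  have hlift : lift ∘ (z + w) = lift ∘ z + lift ∘ w - (2 : ZMod 4) • (lift ∘ z * lift ∘ w) :=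
    funext fun j => by simp [lift_add, smul_eq_mul]
  simp only [quadForm, twice_dotProduct_mulVec, hlift, add_dotProduct, sub_dotProduct,
    dotProduct_add, dotProduct_sub, mulVec_add, mulVec_sub, mulVec_smul, smul_dotProduct,
    dotProduct_smul, smul_eq_mul]
  set a := lift ∘ z
  set b := lift ∘ w
  have hM : (Q.map lift).IsSymm := hQ.map lift
  have h4 : (4 : ZMod 4) = 0 := rfl
  -- the cross terms pair up by symmetry, and the correction `2 (a * b)` only adds multiples of 4
  linear_combination dotProduct_mulVec_comm hM b a + 2 * dotProduct_mulVec_comm hM a (a * b)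
    + 2 * dotProduct_mulVec_comm hM b (a * b)
    + ((a * b) ⬝ᵥ Q.map lift *ᵥ (a * b) - a ⬝ᵥ Q.map lift *ᵥ (a * b)
      - b ⬝ᵥ Q.map lift *ᵥ (a * b)) * h4

def rmExponent (Q : Matrix ι ι (ZMod 2)) (ℓ : ι → ZMod 2) (ε : ZMod 4) (y : ι → ZMod 2) :
    ZMod 4 :=
  quadForm Q y + twice (ℓ ⬝ᵥ y) + ε

lemma rmExponent_zero (Q : Matrix ι ι (ZMod 2)) (ℓ : ι → ZMod 2) (ε : ZMod 4) :
    rmExponent Q ℓ ε 0 = ε := by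
  have : lift ∘ (0 : ι → ZMod 2) = 0 := rfl
  simp [rmExponent, quadForm, this]

lemma rmExponent_add {Q : Matrix ι ι (ZMod 2)} (hQ : Q.IsSymm) (ℓ : ι → ZMod 2) (ε : ZMod 4)
    (z w : ι → ZMod 2) :
    rmExponent Q ℓ ε (z + w)
      = rmExponent Q ℓ ε z + rmExponent Q ℓ ε w - ε + twice (z ⬝ᵥ Q *ᵥ w) := by
  simp only [rmExponent, quadForm_add hQ, dotProduct_add, map_add]
  ring

end Exponent

section CharacterSum

variable {ι : Type*} [Fintype ι]

noncomputable def signChar (u : ι → ZMod 2) : AddChar (ι → ZMod 2) ℂ where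
  toFun z := ψ (twice (z ⬝ᵥ u))
  map_zero_eq_one' := by simp
  map_add_eq_mul' z w := by rw [add_dotProduct, map_add, AddChar.map_add_eq_mul]

lemma signChar_apply (u z : ι → ZMod 2) : signChar u z = ψ (twice (z ⬝ᵥ u)) := rfl

variable [DecidableEq ι]

lemma signChar_eq_zero_iff (u : ι → ZMod 2) : signChar u = 0 ↔ u = 0 := by
  refine ⟨fun h => ?_, fun h => by ext z; simp [signChar_apply, h]⟩
  by_contra hu
  obtain ⟨j, hj⟩ := Function.ne_iff.mp hu
  have huj : u j = 1 := Fin.eq_one_of_ne_zero _ hj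
  have := DFunLike.congr_fun h (Pi.single j 1)
  rw [signChar_apply, single_dotProduct, one_mul, huj, stdAddChar_twice_one, AddChar.zero_apply] at this
  norm_num at this

lemma sum_stdAddChar_twice_dotProduct (u : ι → ZMod 2) :
    ∑ z : ι → ZMod 2, ψ (twice (z ⬝ᵥ u)) = if u = 0 then 2 ^ Fintype.card ι else 0 := by
  have hcard : Fintype.card (ι → ZMod 2) = 2 ^ Fintype.card ι := by simp [ZMod.card]
  simpa only [signChar_apply, signChar_eq_zero_iff, hcard, Nat.cast_pow, Nat.cast_ofNat] using
    AddChar.sum_eq_ite (signChar u)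

lemma sum_stdAddChar_mul_conj {D : (ι → ZMod 2) → ZMod 4} (M : Matrix ι ι (ZMod 2))
    (hD : ∀ z w, D (z + w) = D z + D w - D 0 + twice (z ⬝ᵥ M *ᵥ w)) :
    (∑ y, ψ (D y)) * starRingEnd ℂ (∑ y, ψ (D y))
      = 2 ^ Fintype.card ι * ∑ w with M *ᵥ w = 0, ψ (D w - D 0) := by
  calc (∑ y, ψ (D y)) * starRingEnd ℂ (∑ y, ψ (D y))
      = ∑ z, ∑ w, ψ (D (z + w) - D z) := by
        rw [map_sum, Finset.sum_mul_sum, Finset.sum_comm]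
        refine Finset.sum_congr rfl fun z _ => ?_
        refine Fintype.sum_equiv (Equiv.addLeft z).symm _ _ fun y => ?_
        simp [conj_stdAddChar, ← AddChar.map_add_eq_mul, sub_eq_add_neg]
    _ = ∑ w, ψ (D w - D 0) * ∑ z, ψ (twice (z ⬝ᵥ M *ᵥ w)) := by
        rw [Finset.sum_comm]
        refine Finset.sum_congr rfl fun w _ => ?_
        rw [Finset.mul_sum]
        refine Finset.sum_congr rfl fun z _ => ?_
        rw [← AddChar.map_add_eq_mul, hD]
        ring_nf
    _ = 2 ^ Fintype.card ι * ∑ w with M *ᵥ w = 0, ψ (D w - D 0) := by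
        simp only [sum_stdAddChar_twice_dotProduct, mul_ite, mul_zero, Finset.sum_ite,
          Finset.sum_const_zero, add_zero, Finset.mul_sum]
        exact Finset.sum_congr rfl fun w _ => mul_comm _ _

end CharacterSum

section TraceGram

variable (K : Type*) {L ι : Type*} [Field K] [Field L] [Algebra K L]

noncomputable def traceGram (b : ι → L) (γ : L) : Matrix ι ι K :=
  of fun j k => Algebra.trace K L (γ * b j * b k)

variable {K}

lemma traceGram_isSymm (b : ι → L) (γ : L) : (traceGram K b γ).IsSymm :=
  Matrix.ext fun j k => by simp only [traceGram, transpose_apply, of_apply, mul_right_comm γ]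

lemma traceGram_sub (b : ι → L) (α β : L) :
    traceGram K b α - traceGram K b β = traceGram K b (α - β) :=
  Matrix.ext fun j k => by simp only [traceGram, Matrix.sub_apply, of_apply, sub_mul, map_sub]

lemma traceGram_mulVec_eq_zero [Fintype ι] [FiniteDimensional K L] [Algebra.IsSeparable K L]
    (b : Module.Basis ι K L) {γ : L} (hγ : γ ≠ 0) {v : ι → K}
    (hv : traceGram K b γ *ᵥ v = 0) : v = 0 := by
  set w := b.equivFun.symm v
  have hw : ∀ j, Algebra.traceForm K L (γ * w) (b j) = 0 := fun j => by
    have := congr_fun hv j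
    simp only [mulVec, dotProduct, traceGram, of_apply, Pi.zero_apply] at this
    rw [Algebra.traceForm_apply, show w = ∑ k, v k • b k from b.equivFun_symm_apply v,
      Finset.mul_sum, Finset.sum_mul, map_sum, ← this]
    refine Finset.sum_congr rfl fun k _ => ?_
    rw [mul_smul_comm, smul_mul_assoc, map_smul, smul_eq_mul, mul_comm, mul_right_comm γ]
  have hγw : γ * w = 0 :=
    (traceForm_nondegenerate K L).1 _ fun x => by
      rw [show Algebra.traceForm K L (γ * w) = 0 from b.ext fun j => hw j]
      rfl
  exact b.equivFun.symm.map_eq_zero_iff.mp ((mul_eq_zero.mp hγw).resolve_left hγ)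

lemma eq_traceGram_of_algebraMap_eq {p n : ℕ} [Fact p.Prime] [Finite L] [Algebra (ZMod p) L]
    (hn : Module.finrank (ZMod p) L = n) (ξ α : L) (Q : Matrix (Fin n) (Fin n) (ZMod p))
    (hQ : ∀ j k : Fin n, algebraMap (ZMod p) L (Q j k)
        = ∑ i ∈ Finset.range n, (α * ξ ^ ((j : ℕ) + (k : ℕ))) ^ (p ^ i)) :
    Q = traceGram (ZMod p) (fun j : Fin n => ξ ^ (j : ℕ)) α := by
  ext j k
  apply (algebraMap (ZMod p) L).injective
  rw [hQ, traceGram, of_apply, FiniteField.algebraMap_trace_eq_sum_pow, hn, Nat.card_zmod,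
    mul_assoc, ← pow_add]

end TraceGram

lemma inv_two_pow_mul_sqrt (n : ℕ) : ((2 : ℝ) ^ n)⁻¹ * √(2 ^ n) = 2 ^ (-(n : ℝ) / 2) := by
  rw [← Real.rpow_natCast, Real.sqrt_eq_rpow, ← Real.rpow_mul zero_le_two,
    ← Real.rpow_neg zero_le_two, ← Real.rpow_add two_pos]
  ring_nf

section Codeword

variable {n : ℕ}

lemma rmPhi_eq (Q : Matrix (Fin n) (Fin n) (ZMod 2)) (ℓ : Fin n → ZMod 2) (ε : ZMod 4)
    (y : Fin n → ZMod 2) :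
    rmPhi n Q ℓ ε y = ((√(2 ^ n) : ℝ) : ℂ)⁻¹ * ψ (rmExponent Q ℓ ε y) := by
  rw [rmPhi, ← stdAddChar_intCast, one_div]
  congr 2
  simp only [rmExponent, quadForm, dotProduct, mulVec, map_sum, twice_apply, lift_mul,
    Finset.mul_sum, Function.comp_apply, Matrix.map_apply, Int.cast_add, Int.cast_mul,
    Int.cast_sum, Int.cast_natCast, Int.cast_ofNat, ZMod.natCast_zmod_val, mul_assoc]
  rfl

lemma herm_rmPhi (A B : Matrix (Fin n) (Fin n) (ZMod 2)) (ℓ ℓ' : Fin n → ZMod 2)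
    (ε ε' : ZMod 4) :
    herm (rmPhi n A ℓ ε) (rmPhi n B ℓ' ε')
      = (2 ^ n : ℂ)⁻¹ * ∑ y, ψ (rmExponent A ℓ ε y - rmExponent B ℓ' ε' y) := by
  have hsqrt : ((√(2 ^ n) : ℝ) : ℂ) * ((√(2 ^ n) : ℝ) : ℂ) = 2 ^ n := by
    rw [← Complex.ofReal_mul, Real.mul_self_sqrt (by positivity)]
    push_cast
    rfl
  simp only [herm, rmPhi_eq, Finset.mul_sum, map_mul, map_inv₀, Complex.conj_ofReal,
    conj_stdAddChar]
  refine Finset.sum_congr rfl fun y _ => ?_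
  rw [sub_eq_add_neg, AddChar.map_add_eq_mul, ← hsqrt, mul_inv]
  ring

lemma herm_rmPhi_eq_zero (Q : Matrix (Fin n) (Fin n) (ZMod 2)) {ℓ ℓ' : Fin n → ZMod 2}
    (hℓ : ℓ ≠ ℓ') (ε ε' : ZMod 4) : herm (rmPhi n Q ℓ ε) (rmPhi n Q ℓ' ε') = 0 := by
  have hexp : ∀ y, rmExponent Q ℓ ε y - rmExponent Q ℓ' ε' y
      = twice (y ⬝ᵥ (ℓ - ℓ')) + (ε - ε') := fun y => by
    rw [dotProduct_comm, sub_dotProduct, map_sub]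
    simp only [rmExponent]
    ring
  simp only [herm_rmPhi, hexp, AddChar.map_add_eq_mul, ← Finset.sum_mul,
    sum_stdAddChar_twice_dotProduct, if_neg (sub_ne_zero.mpr hℓ), zero_mul, mul_zero]

lemma norm_herm_rmPhi_of_injective {A B : Matrix (Fin n) (Fin n) (ZMod 2)} (hA : A.IsSymm)
    (hB : B.IsSymm) (hAB : ∀ w, (A - B) *ᵥ w = 0 → w = 0) (ℓ ℓ' : Fin n → ZMod 2)
    (ε ε' : ZMod 4) :
    ‖herm (rmPhi n A ℓ ε) (rmPhi n B ℓ' ε')‖ = 2 ^ (-(n : ℝ) / 2) := by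
  set D := fun y => rmExponent A ℓ ε y - rmExponent B ℓ' ε' y
  have hD : ∀ z w, D (z + w) = D z + D w - D 0 + twice (z ⬝ᵥ (A - B) *ᵥ w) := fun z w => by
    simp only [D, rmExponent_add hA, rmExponent_add hB, rmExponent_zero, sub_mulVec,
      dotProduct_sub, map_sub]
    ring
  have hker : ({w | (A - B) *ᵥ w = 0} : Finset (Fin n → ZMod 2)) = {0} := by
    ext w
    simpa using ⟨hAB w, fun hw => by rw [hw, mulVec_zero]⟩
  have hS := sum_stdAddChar_mul_conj (A - B) hD
  rw [hker, Finset.sum_singleton, sub_self, AddChar.map_zero_eq_one, mul_one, Complex.mul_conj,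
    Fintype.card_fin] at hS
  have hnorm : ‖∑ y, ψ (D y)‖ = √(2 ^ n) := by
    rw [Complex.norm_def, show Complex.normSq _ = 2 ^ n by exact_mod_cast hS]
  rw [herm_rmPhi, norm_mul, hnorm, norm_inv, norm_pow, Complex.norm_ofNat]
  exact inv_two_pow_mul_sqrt n

end Codeword

end Kerdock

theorem stmt_12_general (n : ℕ) (h : Polynomial (ZMod 2))
    (hdeg : h.natDegree = n) (hirr : Irreducible h)
    (α β : AdjoinRoot h)
    (Kα Kβ : Matrix (Fin n) (Fin n) (ZMod 2))
    (hKα : ∀ j k : Fin n, algebraMap (ZMod 2) (AdjoinRoot h) (Kα j k)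
        = ∑ i ∈ Finset.range n, (α * (AdjoinRoot.root h) ^ ((j : ℕ) + (k : ℕ))) ^ (2 ^ i))
    (hKβ : ∀ j k : Fin n, algebraMap (ZMod 2) (AdjoinRoot h) (Kβ j k)
        = ∑ i ∈ Finset.range n, (β * (AdjoinRoot.root h) ^ ((j : ℕ) + (k : ℕ))) ^ (2 ^ i))
    (ℓ ℓ' : Fin n → ZMod 2) (ε ε' : ZMod 4)
    (hne : (α, ℓ) ≠ (β, ℓ')) :
    ‖herm (rmPhi n Kα ℓ ε) (rmPhi n Kβ ℓ' ε')‖ ≤ (2 : ℝ) ^ (-(n : ℝ) / 2) := by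
  have := Fact.mk hirr
  let pb := AdjoinRoot.powerBasis hirr.ne_zero
  have hdim : pb.dim = n := (AdjoinRoot.powerBasis_dim _).trans hdeg
  have := pb.finite
  have := Module.finite_of_finite (ZMod 2) (M := AdjoinRoot h)
  have hfinrank : Module.finrank (ZMod 2) (AdjoinRoot h) = n := pb.finrank.trans hdim
  let b := pb.basis.reindex (finCongr hdim)
  have hb : ⇑b = fun j : Fin n => AdjoinRoot.root h ^ (j : ℕ) := by
    ext j
    simp [b, pb]
  rw [Kerdock.eq_traceGram_of_algebraMap_eq hfinrank _ _ _ hKα,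
    Kerdock.eq_traceGram_of_algebraMap_eq hfinrank _ _ _ hKβ, ← hb]
  by_cases hαβ : α = β
  · subst hαβ
    rw [Kerdock.herm_rmPhi_eq_zero _ (fun hℓ => hne (by rw [hℓ])), norm_zero]
    positivity
  · refine (Kerdock.norm_herm_rmPhi_of_injective (Kerdock.traceGram_isSymm _ _)
      (Kerdock.traceGram_isSymm _ _) (fun w hw => ?_) ℓ ℓ' ε ε').le
    rw [Kerdock.traceGram_sub] at hw
    exact Kerdock.traceGram_mulVec_eq_zero b (sub_ne_zero.mpr hαβ) hw

/-- The Kerdock code is (1/√N)-incoherent: for any α, β ∈ 𝔽(2ⁿ),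
ℓ, ℓ' ∈ ℤ₂ⁿ and ε, ε' ∈ ℤ₄ with (α, ℓ) ≠ (β, ℓ'), the exponentiated codewords built
from the trace-Kerdock matrices K_α, K_β satisfy
|⟨φ_{K_α,ℓ,ε}, φ_{K_β,ℓ',ε'}⟩| ≤ 2^{−n/2} = 1/√N. -/
theorem stmt_12 (n : ℕ) (hn : 1 ≤ n) (h : Polynomial (ZMod 2))
    (hmonic : h.Monic) (hdeg : h.natDegree = n) (hirr : Irreducible h)
    (hprim : orderOf (AdjoinRoot.root h) = 2 ^ n - 1)
    (α β : AdjoinRoot h)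
    (Kα Kβ : Matrix (Fin n) (Fin n) (ZMod 2))
    (hKα : ∀ j k : Fin n, algebraMap (ZMod 2) (AdjoinRoot h) (Kα j k)
        = ∑ i ∈ Finset.range n, (α * (AdjoinRoot.root h) ^ ((j : ℕ) + (k : ℕ))) ^ (2 ^ i))
    (hKβ : ∀ j k : Fin n, algebraMap (ZMod 2) (AdjoinRoot h) (Kβ j k)
        = ∑ i ∈ Finset.range n, (β * (AdjoinRoot.root h) ^ ((j : ℕ) + (k : ℕ))) ^ (2 ^ i))
    (ℓ ℓ' : Fin n → ZMod 2) (ε ε' : ZMod 4)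
    (hne : (α, ℓ) ≠ (β, ℓ')) :
    ‖herm (rmPhi n Kα ℓ ε) (rmPhi n Kβ ℓ' ε')‖ ≤ (2 : ℝ) ^ (-(n : ℝ) / 2) :=
  stmt_12_general n h hdeg hirr α β Kα Kβ hKα hKβ ℓ ℓ' ε ε' hne
end

section
/- Let φ, s ∈ ℂ^N (N = 2ⁿ, vectors indexed by y ∈ {0,1}ⁿ) with |φ(y)| = 2^{−n/2} for every y, ‖s‖ = 1, and |⟨φ, s⟩| ≥ √(1/k) for a real k > 0. Then for each j with 0 ≤ j ≤ n, there are at least 2^{n−j}/(4k) strings y'' ∈ {0,1}^{n−j} such that |⟨R_{y''}φ, R_{y''}s⟩| ≥ (1/√(4k))·2^{j−n}. -/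
/-- Identify {0,1}ⁿ with {0,1}ʲ × {0,1}^{n−j}: combine y' ∈ {0,1}ʲ and
y'' ∈ {0,1}^{n−j} into y = y'y'' ∈ {0,1}ⁿ. -/
def combine (n j : ℕ) (hj : j ≤ n) (y' : Fin j → ZMod 2) (y'' : Fin (n - j) → ZMod 2) :
    Fin n → ZMod 2 :=
  fun i => if hij : (i : ℕ) < j then y' ⟨i, hij⟩
    else y'' ⟨(i : ℕ) - j, by have := i.isLt; omega⟩

/-!
Split `⟨φ, s⟩` into the `2^{n-j}` block inner products `a(y'') = |⟨R_{y''}φ, R_{y''}s⟩|`, so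
`Σ a ≥ 1/√k`. Cauchy–Schwarz inside each block together with `‖R_{y''}φ‖² = 2^{j-n}` and
`Σ ‖R_{y''}s‖² = 1` gives `Σ a² ≤ 2^{j-n}`. The blocks below the threshold `t = 2^{j-n}/(2√k)`
contribute at most `2^{n-j} t = 1/(2√k)`, so the heavy blocks carry at least `1/(2√k)`, and
Cauchy–Schwarz over the heavy blocks, `(Σ_H a)² ≤ |H| Σ_H a²`, bounds `|H|` from below.
-/

open Finset

section Counting

variable {ι : Type*} [Fintype ι] [DecidableEq ι]

theorem sum_le_sum_filter_le_add_card_mul (a : ι → ℝ) {t : ℝ} (ht : 0 ≤ t) :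
    ∑ i, a i ≤ ∑ i with t ≤ a i, a i + Fintype.card ι * t := by
  set H : Finset ι := {i | t ≤ a i}
  rw [← sum_add_sum_compl H a]
  gcongr
  calc ∑ i ∈ Hᶜ, a i ≤ ∑ _i ∈ Hᶜ, t := sum_le_sum fun i hi => by
        simp only [H, mem_compl, mem_filter, mem_univ, true_and, not_le] at hi
        exact hi.le
    _ = #Hᶜ * t := by rw [sum_const, nsmul_eq_mul]
    _ ≤ Fintype.card ι * t := by gcongr; exact card_le_univ _

theorem sq_div_four_le_card_filter_mul (a : ι → ℝ) {A B t : ℝ} (ht : 0 ≤ t)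
    (hcard : Fintype.card ι * t ≤ A / 2) (hsum : A ≤ ∑ i, a i) (hsq : ∑ i, a i ^ 2 ≤ B) :
    A ^ 2 / 4 ≤ #{i | t ≤ a i} * B := by
  have hA : 0 ≤ A / 2 := le_trans (by positivity) hcard
  have hheavy : A / 2 ≤ ∑ i with t ≤ a i, a i := by
    linarith [sum_le_sum_filter_le_add_card_mul a ht]
  calc A ^ 2 / 4 = (A / 2) ^ 2 := by ring
    _ ≤ (∑ i with t ≤ a i, a i) ^ 2 := pow_le_pow_left₀ hA hheavy 2
    _ ≤ #{i | t ≤ a i} * ∑ i with t ≤ a i, a i ^ 2 := sq_sum_le_card_mul_sum_sq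
    _ ≤ #{i | t ≤ a i} * B := by
        gcongr
        exact (sum_le_univ_sum_of_nonneg fun i => sq_nonneg (a i)).trans hsq

end Counting

theorem norm_herm_sq_le {ι : Type*} [Fintype ι] (u v : ι → ℂ) :
    ‖herm u v‖ ^ 2 ≤ (∑ y, ‖u y‖ ^ 2) * ∑ y, ‖v y‖ ^ 2 := by
  have hle : ‖herm u v‖ ≤ ∑ y, ‖u y‖ * ‖v y‖ :=
    (norm_sum_le _ _).trans_eq (by simp only [norm_mul, Complex.norm_conj])
  exact (pow_le_pow_left₀ (norm_nonneg _) hle 2).trans (sum_mul_sq_le_sq_mul_sq _ _ _)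

section Blocks

variable {n j : ℕ} (hj : j ≤ n)

/-- The restriction `R_{y''} v`. -/
def restrictBlock {α : Type*} (v : (Fin n → ZMod 2) → α) (y'' : Fin (n - j) → ZMod 2) :
    (Fin j → ZMod 2) → α :=
  fun y' => v (combine n j hj y' y'')

def combineEquiv : (Fin j → ZMod 2) × (Fin (n - j) → ZMod 2) ≃ (Fin n → ZMod 2) where
  toFun p := combine n j hj p.1 p.2
  invFun y := (fun i => y ⟨i, lt_of_lt_of_le i.isLt hj⟩,
               fun i => y ⟨j + i, by omega⟩)
  left_inv := by
    rintro ⟨y', y''⟩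
    refine Prod.ext (funext fun i => by simp [combine]) (funext fun i => ?_)
    simp only [combine, dif_neg (show ¬(j + (i : ℕ) < j) by omega)]
    congr 1
    ext
    simp
  right_inv y := by
    funext i
    by_cases h : (i : ℕ) < j
    · simp [combine, h]
    · simp only [combine, dif_neg h]
      congr 1
      ext
      simp
      omega

theorem sum_eq_sum_sum_restrictBlock {M : Type*} [AddCommMonoid M] (f : (Fin n → ZMod 2) → M) :
    ∑ y, f y = ∑ y'', ∑ y', restrictBlock hj f y'' y' := by
  rw [← Equiv.sum_comp (combineEquiv hj) f, Fintype.sum_prod_type_right]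
  rfl

theorem herm_eq_sum_herm_restrictBlock (u v : (Fin n → ZMod 2) → ℂ) :
    herm u v = ∑ y'', herm (restrictBlock hj u y'') (restrictBlock hj v y'') :=
  sum_eq_sum_sum_restrictBlock hj fun y => u y * (starRingEnd ℂ) (v y)

theorem sum_norm_sq_restrictBlock_of_norm_eq (φ : (Fin n → ZMod 2) → ℂ)
    (hφ : ∀ y, ‖φ y‖ = (2 : ℝ) ^ (-(n : ℝ) / 2)) (y'' : Fin (n - j) → ZMod 2) :
    ∑ y', ‖restrictBlock hj φ y'' y'‖ ^ 2 = (2 : ℝ) ^ ((j : ℝ) - n) := by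
  have hsq : ((2 : ℝ) ^ (-(n : ℝ) / 2)) ^ 2 = (2 : ℝ) ^ (-(n : ℝ)) := by
    rw [← Real.rpow_natCast, ← Real.rpow_mul zero_le_two]
    norm_num
  simp only [restrictBlock, hφ, hsq, sum_const, card_univ, Fintype.card_fun, ZMod.card,
    Fintype.card_fin, nsmul_eq_mul, Nat.cast_pow, Nat.cast_ofNat]
  rw [← Real.rpow_natCast, ← Real.rpow_add zero_lt_two, ← sub_eq_add_neg]

theorem sum_norm_herm_restrictBlock_sq_le (φ s : (Fin n → ZMod 2) → ℂ)
    (hφ : ∀ y, ‖φ y‖ = (2 : ℝ) ^ (-(n : ℝ) / 2))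
    (hs : ∑ y : Fin n → ZMod 2, ‖s y‖ ^ 2 = 1) :
    ∑ y'', ‖herm (restrictBlock hj φ y'') (restrictBlock hj s y'')‖ ^ 2 ≤
      (2 : ℝ) ^ ((j : ℝ) - n) := by
  calc ∑ y'', ‖herm (restrictBlock hj φ y'') (restrictBlock hj s y'')‖ ^ 2
      ≤ ∑ y'', (2 : ℝ) ^ ((j : ℝ) - n) * ∑ y', ‖restrictBlock hj s y'' y'‖ ^ 2 := by
        gcongr with y''
        simpa only [sum_norm_sq_restrictBlock_of_norm_eq hj φ hφ] using
          norm_herm_sq_le (restrictBlock hj φ y'') (restrictBlock hj s y'')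
    _ = (2 : ℝ) ^ ((j : ℝ) - n) := by
        have hblocks : ∑ y'', ∑ y', ‖restrictBlock hj s y'' y'‖ ^ 2 = 1 :=
          (sum_eq_sum_sum_restrictBlock hj _).symm.trans hs
        rw [← mul_sum, hblocks, mul_one]

end Blocks

/-- Let φ, s ∈ ℂ^N (N = 2ⁿ) with |φ(y)| = 2^{−n/2} for every y, ‖s‖ = 1
(i.e. Σ_y |s(y)|² = 1), and |⟨φ, s⟩| ≥ √(1/k) for a real k > 0.  Then for each
0 ≤ j ≤ n, there are at least 2^{n−j}/(4k) strings y'' ∈ {0,1}^{n−j} with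
|⟨R_{y''}φ, R_{y''}s⟩| ≥ (1/√(4k))·2^{j−n}. -/
theorem stmt_13 (n j : ℕ) (hj : j ≤ n) (k : ℝ) (hk : 0 < k)
    (φ s : (Fin n → ZMod 2) → ℂ)
    (hφ : ∀ y, ‖φ y‖ = (2 : ℝ) ^ (-(n : ℝ) / 2))
    (hs : ∑ y : Fin n → ZMod 2, ‖s y‖ ^ 2 = 1)
    (hheavy : Real.sqrt (1 / k) ≤ ‖herm φ s‖) :
    (2 : ℝ) ^ ((n : ℝ) - j) / (4 * k) ≤
      (Nat.card {y'' : Fin (n - j) → ZMod 2 //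
        (1 / Real.sqrt (4 * k)) * (2 : ℝ) ^ ((j : ℝ) - n) ≤
          ‖herm (fun y' => φ (combine n j hj y' y''))
            (fun y' => s (combine n j hj y' y''))‖} : ℝ) := by
  set a := fun y'' => ‖herm (restrictBlock hj φ y'') (restrictBlock hj s y'')‖
  set M : ℝ := (2 : ℝ) ^ ((n : ℝ) - j)
  have hM : 0 < M := by positivity
  have hMinv : (2 : ℝ) ^ ((j : ℝ) - n) = M⁻¹ := by rw [← Real.rpow_neg zero_le_two, neg_sub]
  have hsum : Real.sqrt (1 / k) ≤ ∑ y'', a y'' :=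
    hheavy.trans ((herm_eq_sum_herm_restrictBlock hj φ s).symm ▸ norm_sum_le _ _)
  have hthreshold : (Fintype.card (Fin (n - j) → ZMod 2) : ℝ) *
      (1 / Real.sqrt (4 * k) * (2 : ℝ) ^ ((j : ℝ) - n)) ≤ Real.sqrt (1 / k) / 2 := by
    have hcard : (Fintype.card (Fin (n - j) → ZMod 2) : ℝ) = M := by
      simp [M, ← Real.rpow_natCast, Nat.cast_sub hj]
    have hsqrt : Real.sqrt (4 * k) = 2 * Real.sqrt k := by
      rw [Real.sqrt_mul zero_le_four, show (4 : ℝ) = 2 ^ 2 by norm_num, Real.sqrt_sq zero_le_two]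
    rw [hcard, hMinv, mul_left_comm, mul_inv_cancel₀ hM.ne', mul_one, hsqrt,
      one_div k, Real.sqrt_inv]
    exact le_of_eq (by ring)
  have key := sq_div_four_le_card_filter_mul a (by positivity) hthreshold hsum
    (sum_norm_herm_restrictBlock_sq_le hj φ s hφ hs)
  rw [Nat.card_eq_fintype_card, Fintype.card_subtype]
  calc M / (4 * k) = Real.sqrt (1 / k) ^ 2 / 4 * M := by
        rw [Real.sq_sqrt (by positivity)]; ring
    _ ≤ _ := mul_le_mul_of_nonneg_right key hM.le
    _ = _ := by rw [mul_assoc, hMinv, inv_mul_cancel₀ hM.ne', mul_one]; rfl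
end

section
/- Fix n, j with 0 ≤ j < n, a j×j symmetric matrix P̃ over ℤ₂, any fixed n×n symmetric matrix P̃' whose upper-left j×j block is P̃, and y'' ∈ {0,1}^{n−j}. Then { R_{y''}φ_{P,ℓ,ε} : P an n×n symmetric matrix over ℤ₂ whose upper-left j×j block is P̃, ℓ ∈ ℤ₂ⁿ, ε ∈ ℤ₄ } = { R_{y''}φ_{P̃',ℓ,ε} : ℓ ∈ ℤ₂ⁿ, ε ∈ ℤ₄ } as sets of vectors in ℂ^{2ʲ}. -/
open Matrix

lemma Ipow_congr {a b : ℤ} (h : (a : ZMod 4) = (b : ZMod 4)) :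
    Complex.I ^ a = Complex.I ^ b := by
  have hd : (4:ℤ) ∣ b - a := ((ZMod.intCast_eq_intCast_iff a b 4).mp h).dvd
  obtain ⟨k, hk⟩ := hd
  have hb : b = a + 4 * k := by omega
  have h4 : Complex.I ^ (4:ℤ) = 1 := by
    rw [show (4:ℤ) = ((4:ℕ):ℤ) from rfl, zpow_natCast]
    simp [pow_succ, Complex.I_mul_I]
  rw [hb, zpow_add₀ Complex.I_ne_zero, _root_.zpow_mul, h4, _root_.one_zpow, mul_one]

lemma two_mul_cast {x y : ℤ} (h : (x : ZMod 2) = (y : ZMod 2)) :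
    ((2*x : ℤ) : ZMod 4) = ((2*y : ℤ) : ZMod 4) := by
  have hd : (2:ℤ) ∣ y - x := ((ZMod.intCast_eq_intCast_iff x y 2).mp h).dvd
  obtain ⟨k, hk⟩ := hd
  rw [ZMod.intCast_eq_intCast_iff]
  have h2 : 2*y - 2*x = 4*k := by omega
  exact Int.modEq_iff_dvd.mpr ⟨k, h2⟩

lemma key_lemma (n j : ℕ) (hj : j < n)
    (P Q : Matrix (Fin n) (Fin n) (ZMod 2)) (hP : P.IsSymm) (hQ : Q.IsSymm)
    (hblock : ∀ a b : Fin j, P (Fin.castLE hj.le a) (Fin.castLE hj.le b)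
      = Q (Fin.castLE hj.le a) (Fin.castLE hj.le b))
    (y'' : Fin (n - j) → ZMod 2) (ℓ : Fin n → ZMod 2) (ε : ZMod 4) :
    ∃ (ℓ' : Fin n → ZMod 2) (ε' : ZMod 4), ∀ y' : Fin j → ZMod 2,
      rmPhi n P ℓ ε (combine n j hj.le y' y'')
        = rmPhi n Q ℓ' ε' (combine n j hj.le y' y'') := by
  have hsymP : ∀ x z, P x z = P z x := fun x z => (hP.apply x z).symm
  have hsymQ : ∀ x z, Q x z = Q z x := fun x z => (hQ.apply x z).symm
  set lo : Fin j → Fin n := Fin.castLE hj.le with hlo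
  set hi : Fin (n - j) → Fin n := fun b => ⟨j + b.1, by have := b.isLt; omega⟩ with hhi
  set c : Fin j → ℤ := fun a =>
    ∑ b, (((P (lo a) (hi b)).val : ℤ) - ((Q (lo a) (hi b)).val : ℤ)) * ((y'' b).val : ℤ)
    with hc
  set C : ℤ := ∑ a, ∑ b, ((y'' a).val : ℤ)
      * (((P (hi a) (hi b)).val : ℤ) - ((Q (hi a) (hi b)).val : ℤ)) * ((y'' b).val : ℤ)
    with hC
  set ℓ' : Fin n → ZMod 2 := fun i =>
    ℓ i + (if h : i.1 < j then ((c ⟨i.1, h⟩ : ℤ) : ZMod 2) else 0) with hℓ'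
  refine ⟨ℓ', ε + ((C : ℤ) : ZMod 4), fun y' => ?_⟩
  set ε' : ZMod 4 := ε + ((C : ℤ) : ZMod 4) with hε'
  set y : Fin n → ZMod 2 := combine n j hj.le y' y'' with hy
  have split : ∀ g : Fin n → ℤ,
      ∑ i, g i = ∑ a : Fin j, g (lo a) + ∑ b : Fin (n-j), g (hi b) := by
    intro g
    rw [← Equiv.sum_comp (finSumFinEquiv.trans (finCongr (by omega : j + (n-j) = n))) g,
      Fintype.sum_sum_type]
    congr 1
  have hcl : ∀ a, y (lo a) = y' a := by
    intro a; simp [hy, combine, hlo]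
  have hch : ∀ b, y (hi b) = y'' b := by
    intro b; simp [hy, combine, hhi]
  have hl'lo : ∀ a : Fin j, ℓ' (lo a) = ℓ (lo a) + ((c a : ℤ) : ZMod 2) := by
    intro a
    simp [hℓ', hlo, a.isLt]
  have hl'hi : ∀ b, (ℓ' (hi b)).val = (ℓ (hi b)).val := by
    intro b
    have : ℓ' (hi b) = ℓ (hi b) := by
      simp only [hℓ', hhi]
      rw [dif_neg (by omega)]
      exact add_zero _
    rw [this]
  set D : ℤ := ∑ a : Fin j,
    (c a + ((ℓ (lo a)).val : ℤ) - ((ℓ' (lo a)).val : ℤ)) * ((y' a).val : ℤ) with hD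
  unfold rmPhi
  congr 1
  apply Ipow_congr
  have h1 : ∑ a : Fin j, ∑ b : Fin j,
        ((y' a).val : ℤ) * ((P (lo a) (lo b)).val : ℤ) * ((y' b).val : ℤ)
      = ∑ a : Fin j, ∑ b : Fin j,
        ((y' a).val : ℤ) * ((Q (lo a) (lo b)).val : ℤ) * ((y' b).val : ℤ) := by
    refine Finset.sum_congr rfl fun a _ => Finset.sum_congr rfl fun b _ => ?_
    rw [hblock a b]
  have h2 : ∑ a : Fin (n-j), ∑ b : Fin j,
        ((y'' a).val : ℤ) * ((P (hi a) (lo b)).val : ℤ) * ((y' b).val : ℤ)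
      = ∑ a : Fin j, ∑ b : Fin (n-j),
        ((y' a).val : ℤ) * ((P (lo a) (hi b)).val : ℤ) * ((y'' b).val : ℤ) := by
    rw [Finset.sum_comm]
    refine Finset.sum_congr rfl fun b _ => Finset.sum_congr rfl fun a _ => ?_
    rw [hsymP (hi a) (lo b)]; ring
  have h3 : ∑ a : Fin (n-j), ∑ b : Fin j,
        ((y'' a).val : ℤ) * ((Q (hi a) (lo b)).val : ℤ) * ((y' b).val : ℤ)
      = ∑ a : Fin j, ∑ b : Fin (n-j),
        ((y' a).val : ℤ) * ((Q (lo a) (hi b)).val : ℤ) * ((y'' b).val : ℤ) := by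
    rw [Finset.sum_comm]
    refine Finset.sum_congr rfl fun b _ => Finset.sum_congr rfl fun a _ => ?_
    rw [hsymQ (hi a) (lo b)]; ring
  have h4 : (∑ a : Fin j, ∑ b : Fin (n-j),
        ((y' a).val : ℤ) * ((P (lo a) (hi b)).val : ℤ) * ((y'' b).val : ℤ))
      - (∑ a : Fin j, ∑ b : Fin (n-j),
        ((y' a).val : ℤ) * ((Q (lo a) (hi b)).val : ℤ) * ((y'' b).val : ℤ))
      = ∑ a : Fin j, c a * ((y' a).val : ℤ) := by
    rw [← Finset.sum_sub_distrib]
    refine Finset.sum_congr rfl fun a _ => ?_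
    rw [← Finset.sum_sub_distrib, hc, Finset.sum_mul]
    refine Finset.sum_congr rfl fun b _ => ?_
    ring
  have h5 : (∑ a : Fin (n-j), ∑ b : Fin (n-j),
        ((y'' a).val : ℤ) * ((P (hi a) (hi b)).val : ℤ) * ((y'' b).val : ℤ))
      - (∑ a : Fin (n-j), ∑ b : Fin (n-j),
        ((y'' a).val : ℤ) * ((Q (hi a) (hi b)).val : ℤ) * ((y'' b).val : ℤ)) = C := by
    rw [hC, ← Finset.sum_sub_distrib]
    refine Finset.sum_congr rfl fun a _ => ?_
    rw [← Finset.sum_sub_distrib]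
    refine Finset.sum_congr rfl fun b _ => ?_
    ring
  have hDD : D = (∑ a : Fin j, c a * ((y' a).val : ℤ))
      + (∑ a : Fin j, ((ℓ (lo a)).val : ℤ) * ((y' a).val : ℤ))
      - (∑ a : Fin j, ((ℓ' (lo a)).val : ℤ) * ((y' a).val : ℤ)) := by
    rw [hD]
    simp only [add_mul, sub_mul, Finset.sum_add_distrib, Finset.sum_sub_distrib]
  have hE : (∑ a : Fin n, ∑ b : Fin n, ((y a).val : ℤ) * ((P a b).val : ℤ) * ((y b).val : ℤ))
      + 2 * ∑ a : Fin n, ((ℓ a).val : ℤ) * ((y a).val : ℤ) + (ε.val : ℤ)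
    = ((∑ a : Fin n, ∑ b : Fin n, ((y a).val : ℤ) * ((Q a b).val : ℤ) * ((y b).val : ℤ))
      + 2 * ∑ a : Fin n, ((ℓ' a).val : ℤ) * ((y a).val : ℤ) + (ε'.val : ℤ))
      + 2 * D + (C + (ε.val : ℤ) - (ε'.val : ℤ)) := by
    simp only [split]
    simp only [hcl, hch, hl'hi]
    simp only [Finset.sum_add_distrib]
    linarith [h1, h2, h3, h4, h5, hDD]
  rw [hE, Int.cast_add, Int.cast_add]
  have hD0 : ((2*D : ℤ) : ZMod 4) = 0 := by
    have hDmod : ((D : ℤ) : ZMod 2) = (((0:ℤ) : ℤ) : ZMod 2) := by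
      rw [hD]
      push_cast
      apply Finset.sum_eq_zero
      intro a _
      have : (((ℓ' (lo a)).val : ZMod 2)) = ℓ (lo a) + ((c a : ℤ) : ZMod 2) := by
        rw [ZMod.natCast_val, ZMod.cast_id, hl'lo a]
      rw [this, ZMod.natCast_val, ZMod.cast_id]
      ring
    have := two_mul_cast hDmod
    simpa using this
  have hε0 : ((C + (ε.val : ℤ) - (ε'.val : ℤ) : ℤ) : ZMod 4) = 0 := by
    push_cast [hε', ZMod.natCast_val, ZMod.cast_id]
    ring
  rw [hD0, hε0, add_zero, add_zero]

/-- Fix 0 ≤ j < n, a j×j symmetric matrix P̃ over ℤ₂, a fixed n×n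
symmetric matrix P̃' whose upper-left j×j block is P̃, and y'' ∈ {0,1}^{n−j}.  Then the
set of restrictions R_{y''}φ_{P,ℓ,ε}, over all n×n symmetric P with upper-left block P̃,
ℓ ∈ ℤ₂ⁿ and ε ∈ ℤ₄, coincides with the set of restrictions R_{y''}φ_{P̃',ℓ,ε} over
ℓ ∈ ℤ₂ⁿ and ε ∈ ℤ₄. -/
theorem stmt_14 (n j : ℕ) (hj : j < n)
    (Pt : Matrix (Fin j) (Fin j) (ZMod 2)) (hPt : Pt.IsSymm)
    (P' : Matrix (Fin n) (Fin n) (ZMod 2)) (hP' : P'.IsSymm)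
    (hblock : ∀ a b : Fin j, P' (Fin.castLE hj.le a) (Fin.castLE hj.le b) = Pt a b)
    (y'' : Fin (n - j) → ZMod 2) :
    {f : (Fin j → ZMod 2) → ℂ |
        ∃ (P : Matrix (Fin n) (Fin n) (ZMod 2)) (ℓ : Fin n → ZMod 2) (ε : ZMod 4),
          P.IsSymm
          ∧ (∀ a b : Fin j, P (Fin.castLE hj.le a) (Fin.castLE hj.le b) = Pt a b)
          ∧ f = fun y' => rmPhi n P ℓ ε (combine n j hj.le y' y'')}
    = {f : (Fin j → ZMod 2) → ℂ |
        ∃ (ℓ : Fin n → ZMod 2) (ε : ZMod 4),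
          f = fun y' => rmPhi n P' ℓ ε (combine n j hj.le y' y'')} := by
  ext f
  constructor
  · rintro ⟨P, ℓ, ε, hPs, hPb, rfl⟩
    obtain ⟨ℓ', ε', h⟩ := key_lemma n j hj P P' hPs hP'
      (fun a b => (hPb a b).trans (hblock a b).symm) y'' ℓ ε
    exact ⟨ℓ', ε', funext h⟩
  · rintro ⟨ℓ, ε, rfl⟩
    exact ⟨P', ℓ, ε, hP', hblock, rfl⟩
end

section
/- There is a constant c₄ > 0 such that the following holds for every N, every real μ with 0 ≤ μ ≤ 1, every real k ≥ 1, and every nonzero signal s ∈ ℂ^N: if A is a finite set of unit vectors in ℂ^N satisfying |⟨φ, φ'⟩| ≤ μ for all distinct φ, φ' ∈ A and |⟨s, φ⟩|² ≥ (1/k)·‖s‖² for all φ ∈ A, and if μ·k ≤ c₄, then |A| ≤ 4k. -/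
/-!
The vectors of a `μ`-coherent family `A` of `n` unit vectors are almost orthogonal: by a Gershgorin
bound on their Gram matrix, `‖∑ c φ • φ‖² ≤ (1 + μ (n - 1)) ∑ |c φ|²`, and by duality this gives the
Bessel-type inequality `∑ |⟨s, φ⟩|² ≤ (1 + μ (n - 1)) ‖s‖²`. If every `φ ∈ A` captures a `1/k`
fraction of the energy of `s`, the left side is at least `n ‖s‖² / k`, so `n ≤ k + μ k n`,
and `μ k ≤ 3/4` forces `n ≤ 4 k`.
-/

open Finset RCLike
open scoped InnerProductSpace ComplexConjugate

section Coherence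

variable {𝕜 E : Type*} [RCLike 𝕜] [NormedAddCommGroup E] [InnerProductSpace 𝕜 E]

theorem norm_sum_smul_sq_le_sum_sum {ι : Type*} (A : Finset ι) (c : ι → 𝕜) (f : ι → E) :
    ‖∑ i ∈ A, c i • f i‖ ^ 2 ≤ ∑ i ∈ A, ∑ j ∈ A, ‖c i‖ * ‖c j‖ * ‖⟪f i, f j⟫_𝕜‖ := by
  have hexp : ⟪∑ i ∈ A, c i • f i, ∑ j ∈ A, c j • f j⟫_𝕜 =
      ∑ i ∈ A, ∑ j ∈ A, conj (c i) * c j * ⟪f i, f j⟫_𝕜 := by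
    rw [sum_inner]
    refine sum_congr rfl fun i _ => ?_
    rw [inner_sum]
    refine sum_congr rfl fun j _ => ?_
    rw [inner_smul_left, inner_smul_right, mul_assoc]
  calc ‖∑ i ∈ A, c i • f i‖ ^ 2 = re ⟪∑ i ∈ A, c i • f i, ∑ j ∈ A, c j • f j⟫_𝕜 :=
        (inner_self_eq_norm_sq _).symm
    _ ≤ ‖∑ i ∈ A, ∑ j ∈ A, conj (c i) * c j * ⟪f i, f j⟫_𝕜‖ := hexp ▸ re_le_norm _
    _ ≤ _ := by
      refine (norm_sum_le _ _).trans (sum_le_sum fun i _ => (norm_sum_le _ _).trans ?_)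
      simp only [norm_mul, norm_conj, le_refl]

theorem norm_sum_smul_sq_le_of_coherence {A : Finset E} {μ : ℝ} (hμ : 0 ≤ μ)
    (hunit : ∀ φ ∈ A, ‖φ‖ = 1) (hcoh : ∀ φ ∈ A, ∀ φ' ∈ A, φ ≠ φ' → ‖⟪φ, φ'⟫_𝕜‖ ≤ μ)
    (c : E → 𝕜) :
    ‖∑ φ ∈ A, c φ • φ‖ ^ 2 ≤ (1 + μ * (#A - 1)) * ∑ φ ∈ A, ‖c φ‖ ^ 2 := by
  classical
  set S := ∑ φ ∈ A, ‖c φ‖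
  set Q := ∑ φ ∈ A, ‖c φ‖ ^ 2
  have hrow : ∀ φ ∈ A, ∑ φ' ∈ A, ‖c φ‖ * ‖c φ'‖ * ‖⟪φ, φ'⟫_𝕜‖ ≤
      ‖c φ‖ ^ 2 + μ * (‖c φ‖ * S - ‖c φ‖ ^ 2) := by
    intro φ hφ
    have hdiag : ‖c φ‖ * ‖c φ‖ * ‖⟪φ, φ⟫_𝕜‖ = ‖c φ‖ ^ 2 := by
      rw [inner_self_eq_norm_sq_to_K, hunit φ hφ]; simp [sq]
    have hoff : ∑ φ' ∈ A.erase φ, ‖c φ‖ * ‖c φ'‖ * ‖⟪φ, φ'⟫_𝕜‖ ≤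
        ∑ φ' ∈ A.erase φ, μ * (‖c φ‖ * ‖c φ'‖) := by
      refine sum_le_sum fun φ' hφ' => ?_
      rw [mul_comm μ]
      gcongr
      exact hcoh φ hφ φ' (mem_of_mem_erase hφ') (ne_of_mem_erase hφ').symm
    have hμS : ∑ φ' ∈ A.erase φ, μ * (‖c φ‖ * ‖c φ'‖) = μ * (‖c φ‖ * S - ‖c φ‖ ^ 2) := by
      rw [← mul_sum, ← mul_sum, sum_erase_eq_sub hφ, mul_sub, sq]
    rw [← add_sum_erase _ _ hφ, hdiag]
    linarith
  have hS : S ^ 2 ≤ #A * Q := sq_sum_le_card_mul_sum_sq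
  calc ‖∑ φ ∈ A, c φ • φ‖ ^ 2 ≤ ∑ φ ∈ A, ∑ φ' ∈ A, ‖c φ‖ * ‖c φ'‖ * ‖⟪φ, φ'⟫_𝕜‖ :=
        norm_sum_smul_sq_le_sum_sum A c id
    _ ≤ ∑ φ ∈ A, (‖c φ‖ ^ 2 + μ * (‖c φ‖ * S - ‖c φ‖ ^ 2)) := sum_le_sum hrow
    _ = Q + μ * (S ^ 2 - Q) := by
      rw [sum_add_distrib, ← mul_sum, sum_sub_distrib, ← sum_mul, sq S]
    _ ≤ (1 + μ * (#A - 1)) * Q := by nlinarith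

theorem sum_norm_inner_sq_le_of_norm_sum_smul_sq_le {A : Finset E} {B : ℝ} (hB : 0 ≤ B)
    (hsyn : ∀ c : E → 𝕜, ‖∑ φ ∈ A, c φ • φ‖ ^ 2 ≤ B * ∑ φ ∈ A, ‖c φ‖ ^ 2) (s : E) :
    ∑ φ ∈ A, ‖⟪s, φ⟫_𝕜‖ ^ 2 ≤ B * ‖s‖ ^ 2 := by
  set M := ∑ φ ∈ A, ‖⟪s, φ⟫_𝕜‖ ^ 2
  set v := ∑ φ ∈ A, conj ⟪s, φ⟫_𝕜 • φ
  have hsv : ⟪s, v⟫_𝕜 = M := by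
    simp only [v, M, inner_sum, inner_smul_right, RCLike.conj_mul, ofReal_sum, ofReal_pow]
  have hMv : M ≤ ‖s‖ * ‖v‖ := by
    calc M = ‖⟪s, v⟫_𝕜‖ := by rw [hsv, norm_ofReal, abs_of_nonneg (by positivity)]
      _ ≤ ‖s‖ * ‖v‖ := norm_inner_le_norm s v
  have hv : ‖v‖ ^ 2 ≤ B * M := by simpa only [v, M, norm_conj] using hsyn fun φ => conj ⟪s, φ⟫_𝕜
  rcases (show 0 ≤ M by positivity).eq_or_lt with hM | hM
  · rw [← hM]; positivity
  · refine le_of_mul_le_mul_left ?_ hM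
    calc M * M ≤ ‖s‖ ^ 2 * ‖v‖ ^ 2 := by nlinarith
      _ ≤ ‖s‖ ^ 2 * (B * M) := by gcongr
      _ = M * (B * ‖s‖ ^ 2) := by ring

theorem sum_norm_inner_sq_le_of_coherence {A : Finset E} {μ : ℝ} (hμ₀ : 0 ≤ μ) (hμ₁ : μ ≤ 1)
    (hunit : ∀ φ ∈ A, ‖φ‖ = 1) (hcoh : ∀ φ ∈ A, ∀ φ' ∈ A, φ ≠ φ' → ‖⟪φ, φ'⟫_𝕜‖ ≤ μ) (s : E) :
    ∑ φ ∈ A, ‖⟪s, φ⟫_𝕜‖ ^ 2 ≤ (1 + μ * (#A - 1)) * ‖s‖ ^ 2 := by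
  refine sum_norm_inner_sq_le_of_norm_sum_smul_sq_le ?_
    (norm_sum_smul_sq_le_of_coherence hμ₀ hunit hcoh) s
  nlinarith [Nat.cast_nonneg (α := ℝ) #A]

end Coherence

/-- There is a constant c₄ > 0 such that for every N, every 0 ≤ μ ≤ 1,
every real k ≥ 1, and every nonzero s ∈ ℂ^N: if A is a finite set of unit vectors in
ℂ^N with |⟨φ, φ'⟩| ≤ μ for all distinct φ, φ' ∈ A and |⟨s, φ⟩|² ≥ (1/k)·‖s‖² for all
φ ∈ A, and μ·k ≤ c₄, then |A| ≤ 4k. -/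
theorem stmt_17 :
    ∃ c₄ : ℝ, 0 < c₄ ∧
      ∀ (N : ℕ) (μ k : ℝ), 0 ≤ μ → μ ≤ 1 → 1 ≤ k →
        ∀ s : EuclideanSpace ℂ (Fin N), s ≠ 0 →
          ∀ A : Finset (EuclideanSpace ℂ (Fin N)),
            (∀ φ ∈ A, ‖φ‖ = 1) →
            (∀ φ ∈ A, ∀ φ' ∈ A, φ ≠ φ' → ‖(inner ℂ φ φ' : ℂ)‖ ≤ μ) →
            (∀ φ ∈ A, (1 / k) * ‖s‖ ^ 2 ≤ ‖(inner ℂ s φ : ℂ)‖ ^ 2) →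
            μ * k ≤ c₄ →
            (A.card : ℝ) ≤ 4 * k := by
  refine ⟨3 / 4, by norm_num, fun N μ k hμ₀ hμ₁ hk s hs A hunit hcoh hcorr hμk => ?_⟩
  have hs2 : 0 < ‖s‖ ^ 2 := by positivity
  have henergy : #A * (1 / k * ‖s‖ ^ 2) ≤ (1 + μ * (#A - 1)) * ‖s‖ ^ 2 := by
    calc #A * (1 / k * ‖s‖ ^ 2) = ∑ _φ ∈ A, 1 / k * ‖s‖ ^ 2 := by rw [sum_const, nsmul_eq_mul]
      _ ≤ ∑ φ ∈ A, ‖⟪s, φ⟫_ℂ‖ ^ 2 := sum_le_sum hcorr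
      _ ≤ _ := sum_norm_inner_sq_le_of_coherence hμ₀ hμ₁ hunit hcoh s
  have hcard : #A ≤ k * (1 + μ * (#A - 1)) := by
    rw [← div_le_iff₀' (by positivity)]
    refine le_of_mul_le_mul_right ?_ hs2
    simpa only [div_eq_mul_one_div (#A : ℝ) k, mul_assoc] using henergy
  nlinarith [Nat.cast_nonneg (α := ℝ) #A]
end

section
/- For every n ≥ 1 and every integer r ≥ 0, the number of n×n Hankel matrices over ℤ₂ whose rank over ℤ₂ is at most r is at most 2^{4r}. -/
/-!
A Hankel matrix of rank at most `r` is determined by its values on the first `2r` and the last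
`2r` antidiagonals. Indeed, the difference `D` of two such matrices is Hankel of rank at most `2r`
and vanishes on those antidiagonals. If `D ≠ 0`, let `t` be its last nonzero antidiagonal; the
cells of antidiagonal `t` form the diagonal of a triangular square submatrix with nonzero diagonal,
of size `min (t + 1) (2n - 1 - t) > 2r`, contradicting the rank bound.
-/

namespace Matrix

theorem card_le_rank_of_isLowerTriangular_submatrix {K m n k : Type*} [Field K] [Fintype n]
    [Fintype k] [LinearOrder k] (A : Matrix m n K) (e : k → m) (f : k → n)
    (htri : (A.submatrix e f).IsLowerTriangular) (hdiag : ∀ i, A (e i) (f i) ≠ 0) :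
    Fintype.card k ≤ A.rank := by
  classical
  calc Fintype.card k = (A.submatrix e f * 1).rank := by
        rw [rank_mul_eq_right_of_isLowerTriangular _ _ htri hdiag, rank_one]
    _ ≤ A.rank := by
        rw [Matrix.mul_one]
        exact rank_submatrix_le A e f

theorem rank_sub_le {K m n : Type*} [Field K] [Fintype m] [Fintype n] (A B : Matrix m n K) :
    (A - B).rank ≤ A.rank + B.rank := by
  have hrange : LinearMap.range (A - B).mulVecLin ≤
      LinearMap.range A.mulVecLin ⊔ LinearMap.range B.mulVecLin := by
    rintro _ ⟨v, rfl⟩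
    rw [mulVecLin_apply, sub_mulVec, sub_eq_add_neg]
    exact Submodule.add_mem_sup ⟨v, rfl⟩ (Submodule.neg_mem _ ⟨v, rfl⟩)
  exact (Submodule.finrank_mono hrange).trans (Submodule.finrank_add_le_finrank_add_finrank _ _)

variable {R K : Type*} {n : ℕ}

def IsHankel (P : Matrix (Fin n) (Fin n) R) : Prop :=
  ∀ j k j' k' : Fin n, (j : ℕ) + (k : ℕ) = (j' : ℕ) + (k' : ℕ) → P j k = P j' k'

/-- The value of a Hankel matrix on the antidiagonal `j + k = a`; `0` if that antidiagonal is
empty. -/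
noncomputable def antidiagValue [Zero R] (P : Matrix (Fin n) (Fin n) R) (a : ℕ) : R :=
  open Classical in
  if h : ∃ c : Fin n × Fin n, (c.1 : ℕ) + c.2 = a then P h.choose.1 h.choose.2 else 0

namespace IsHankel

theorem apply_eq_antidiagValue [Zero R] {P : Matrix (Fin n) (Fin n) R} (hP : P.IsHankel)
    (j k : Fin n) : P j k = P.antidiagValue (j + k) := by
  have h : ∃ c : Fin n × Fin n, (c.1 : ℕ) + c.2 = j + k := ⟨(j, k), rfl⟩
  rw [antidiagValue, dif_pos h]
  exact hP _ _ _ _ h.choose_spec.symm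

theorem sub [Ring R] {P Q : Matrix (Fin n) (Fin n) R} (hP : P.IsHankel) (hQ : Q.IsHankel) :
    (P - Q).IsHankel := fun j k j' k' h => by
  simp only [sub_apply, hP j k j' k' h, hQ j k j' k' h]

variable [Field K] {D : Matrix (Fin n) (Fin n) K}

theorem min_le_rank (hD : D.IsHankel) {j₀ k₀ : Fin n} (hne : D j₀ k₀ ≠ 0)
    (hzero : ∀ j k : Fin n, (j₀ : ℕ) + k₀ < j + k → D j k = 0) :
    min ((j₀ : ℕ) + k₀ + 1) (2 * n - 1 - (j₀ + k₀)) ≤ D.rank := by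
  have hj₀ := j₀.isLt
  have hk₀ := k₀.isLt
  set t := (j₀ : ℕ) + k₀
  set c := min t (n - 1)
  -- rows run down from `c`, columns up from `t - c`, so cell `(i, l)` lies on antidiagonal
  -- `t + l - i`
  let e : Fin (min (t + 1) (2 * n - 1 - t)) → Fin n := fun i => ⟨c - i, by omega⟩
  let f : Fin (min (t + 1) (2 * n - 1 - t)) → Fin n := fun l => ⟨t - c + l, by omega⟩
  have hsum : ∀ i l, ((e i : ℕ) + f l) = t + l - i := fun i l => by
    have := i.isLt
    simp only [e, f]
    omega
  simpa using card_le_rank_of_isLowerTriangular_submatrix D e f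
    (fun i l hil => hzero _ _ (by have := OrderDual.toDual_lt_toDual.mp hil; rw [hsum]; omega))
    (fun i => by rwa [hD _ _ j₀ k₀ (by rw [hsum]; omega)])

theorem eq_zero_of_rank_le (hD : D.IsHankel) {m : ℕ} (hrank : D.rank ≤ m)
    (hfront : ∀ j k : Fin n, (j : ℕ) + k < m → D j k = 0)
    (hback : ∀ j k : Fin n, 2 * n ≤ (j : ℕ) + k + m + 1 → D j k = 0) : D = 0 := by
  classical
  by_contra hD0
  obtain ⟨j, k, hjk⟩ : ∃ j k, D j k ≠ 0 := by
    by_contra! h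
    exact hD0 (Matrix.ext h)
  obtain ⟨⟨j₀, k₀⟩, hmem, hmax⟩ :=
    Finset.exists_max_image (Finset.univ.filter fun c : Fin n × Fin n => D c.1 c.2 ≠ 0)
      (fun c => (c.1 : ℕ) + c.2) ⟨(j, k), by simpa using hjk⟩
  have hne : D j₀ k₀ ≠ 0 := (Finset.mem_filter.mp hmem).2
  have hzero : ∀ j k : Fin n, (j₀ : ℕ) + k₀ < j + k → D j k = 0 := fun j k hlt => by
    by_contra h
    exact absurd (hmax (j, k) (by simpa using h)) (not_le.mpr hlt)
  have hlow : m ≤ (j₀ : ℕ) + k₀ := by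
    by_contra h
    exact hne (hfront j₀ k₀ (by omega))
  have hhigh : (j₀ : ℕ) + k₀ + m + 1 < 2 * n := by
    by_contra h
    exact hne (hback j₀ k₀ (by omega))
  have := hD.min_le_rank hne hzero
  omega

theorem eq_of_antidiagValue_eq {P Q : Matrix (Fin n) (Fin n) K} (hP : P.IsHankel)
    (hQ : Q.IsHankel) {r : ℕ} (hPr : P.rank ≤ r) (hQr : Q.rank ≤ r)
    (hfront : ∀ a < 2 * r, P.antidiagValue a = Q.antidiagValue a)
    (hback : ∀ a < 2 * r, P.antidiagValue (2 * n - 2 - a) = Q.antidiagValue (2 * n - 2 - a)) :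
    P = Q := by
  refine sub_eq_zero.mp ((hP.sub hQ).eq_zero_of_rank_le (m := 2 * r) ?_ ?_ ?_)
  · have := rank_sub_le P Q
    omega
  · intro j k h
    rw [sub_apply, hP.apply_eq_antidiagValue, hQ.apply_eq_antidiagValue, hfront _ h, sub_self]
  · intro j k h
    have hjk : (j : ℕ) + k = 2 * n - 2 - (2 * n - 2 - (j + k)) := by omega
    rw [sub_apply, hP.apply_eq_antidiagValue, hQ.apply_eq_antidiagValue, hjk,
      hback _ (by omega), sub_self]

end IsHankel

theorem card_isHankel_rank_le [Field K] [Fintype K] (r : ℕ) :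
    Nat.card {P : Matrix (Fin n) (Fin n) K // P.IsHankel ∧ P.rank ≤ r} ≤
      Fintype.card K ^ (4 * r) := by
  let boundary (P : {P : Matrix (Fin n) (Fin n) K // P.IsHankel ∧ P.rank ≤ r}) :
      (Fin (2 * r) → K) × (Fin (2 * r) → K) :=
    (fun a => P.1.antidiagValue a, fun a => P.1.antidiagValue (2 * n - 2 - a))
  have hinj : Function.Injective boundary := fun P Q h =>
    Subtype.ext <| P.2.1.eq_of_antidiagValue_eq Q.2.1 P.2.2 Q.2.2
      (fun a ha => congrFun (congrArg Prod.fst h) ⟨a, ha⟩)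
      (fun a ha => congrFun (congrArg Prod.snd h) ⟨a, ha⟩)
  calc _ ≤ Nat.card ((Fin (2 * r) → K) × (Fin (2 * r) → K)) :=
        Nat.card_le_card_of_injective boundary hinj
    _ = Fintype.card K ^ (4 * r) := by
        rw [Nat.card_eq_fintype_card, Fintype.card_prod, Fintype.card_fun, Fintype.card_fin,
          ← pow_add]
        ring_nf

end Matrix

theorem stmt_18_general (n : ℕ) (r : ℕ) :
    Nat.card {P : Matrix (Fin n) (Fin n) (ZMod 2) //
        (∀ j k j' k' : Fin n, (j : ℕ) + (k : ℕ) = (j' : ℕ) + (k' : ℕ) → P j k = P j' k')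
        ∧ P.rank ≤ r}
      ≤ 2 ^ (4 * r) :=
  (Matrix.card_isHankel_rank_le r).trans_eq (by rw [ZMod.card])

/-- For every n ≥ 1 and integer r ≥ 0, the number of n×n Hankel matrices
over ℤ₂ (matrices whose (j,k) entry depends only on j+k) whose rank over ℤ₂ is at most
r is at most 2^{4r}. -/
theorem stmt_18 (n : ℕ) (hn : 1 ≤ n) (r : ℕ) :
    Nat.card {P : Matrix (Fin n) (Fin n) (ZMod 2) //
        (∀ j k j' k' : Fin n, (j : ℕ) + (k : ℕ) = (j' : ℕ) + (k' : ℕ) → P j k = P j' k')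
        ∧ P.rank ≤ r}
      ≤ 2 ^ (4 * r) :=
  stmt_18_general n r
end

section
/- There exist absolute constants C > 0 and c > 0 (independent of n, k, and s) such that for every n ≥ 1, every real k ≥ 1, and every nonzero signal s ∈ ℂ^N with N = 2ⁿ, the number of Hankel codewords that are heavy for s, i.e. the number of pairs (P, ℓ) with P an n×n Hankel matrix over ℤ₂ and ℓ ∈ ℤ₂ⁿ such that |⟨s, φ_{P,ℓ,0}⟩|² ≥ (1/k)·‖s‖², is at most C·k^c. -/
open Matrix

/-!
For a fixed `P` the codewords `φ_{P,ℓ,0}` are orthonormal, so by Bessel's inequality each `P`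
carries at most `k` heavy `ℓ`. For symmetric `P, P'` a Gauss sum computation gives
`|⟨φ_{P,ℓ,0}, φ_{P',ℓ',0}⟩|² ≤ |ker (P' - P)| / 2ⁿ`, so two codewords are nearly orthogonal
unless the Hankel matrix `P' - P` has a kernel larger than `2^(n-R)`. Such a matrix has nonzero
kernel vectors supported on its first and on its last `R` coordinates; these are linear
recurrences of order `< R` for its defining sequence, run forwards and backwards, so together with
the first and last `R` terms of the sequence they determine the matrix: there are at most
`2^(4R)` such matrices. Correlating `s` with the sum of its heavy codewords then gives
`#heavy ≤ 2k³ · 2^(4R)`, and `4k⁴ < 2^R ≤ 8k⁴` yields `O(k¹⁹)`.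
-/

open Finset

section QuadraticPhase

variable {ι : Type*}

def liftVec (y : ι → ZMod 2) : ι → ℤ := fun j => (y j).val

lemma liftVec_add (x y : ι → ZMod 2) :
    liftVec (x + y) = liftVec x + liftVec y + 2 • -(liftVec x * liftVec y) := by
  have key : ∀ a b : ZMod 2, ((a + b).val : ℤ) = a.val + b.val + 2 * -(a.val * b.val) := by
    decide
  funext j
  simp [liftVec, key]

@[simp] lemma intCast_liftVec (y : ι → ZMod 2) (j : ι) : ((liftVec y j : ℤ) : ZMod 2) = y j := by
  simp [liftVec]

lemma Complex.I_zpow_two_mul (m : ℤ) : Complex.I ^ (2 * m) = (-1) ^ m := by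
  rw [_root_.zpow_mul, zpow_two, Complex.I_mul_I]

variable [Fintype ι]

noncomputable def quadPhase (M : Matrix ι ι ℤ) (L a : ι → ℤ) : ℂ :=
  Complex.I ^ (a ⬝ᵥ M *ᵥ a + 2 * (L ⬝ᵥ a))

lemma norm_quadPhase (M : Matrix ι ι ℤ) (L a : ι → ℤ) : ‖quadPhase M L a‖ = 1 := by
  simp [quadPhase]

lemma quadPhase_zero_left (L a : ι → ℤ) : quadPhase 0 L a = (-1) ^ (L ⬝ᵥ a) := by
  simp [quadPhase, Complex.I_zpow_two_mul]

lemma conj_quadPhase_mul (M M' : Matrix ι ι ℤ) (L L' a : ι → ℤ) :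
    starRingEnd ℂ (quadPhase M L a) * quadPhase M' L' a = quadPhase (M' - M) (L' - L) a := by
  have hconj : starRingEnd ℂ Complex.I = Complex.I⁻¹ := by
    rw [Complex.conj_I, Complex.inv_I]
  rw [quadPhase, quadPhase, quadPhase, map_zpow₀, hconj, _root_.inv_zpow',
    ← zpow_add₀ Complex.I_ne_zero, sub_mulVec, dotProduct_sub, sub_dotProduct]
  ring_nf

variable {M : Matrix ι ι ℤ}

lemma quadPhase_add (hM : M.IsSymm) (L a b : ι → ℤ) :
    quadPhase M L (a + b) = quadPhase M L a * quadPhase M L b * (-1) ^ (b ⬝ᵥ M *ᵥ a) := by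
  have hswap : a ⬝ᵥ M *ᵥ b = b ⬝ᵥ M *ᵥ a := by
    rw [dotProduct_mulVec, ← mulVec_transpose, hM.eq, dotProduct_comm]
  rw [quadPhase, quadPhase, quadPhase, ← Complex.I_zpow_two_mul, ← zpow_add₀ Complex.I_ne_zero,
    ← zpow_add₀ Complex.I_ne_zero, mulVec_add, dotProduct_add, add_dotProduct, add_dotProduct,
    dotProduct_add, hswap]
  ring_nf

lemma quadPhase_add_two_smul (hM : M.IsSymm) (L a e : ι → ℤ) :
    quadPhase M L (a + 2 • e) = quadPhase M L a := by
  have hfour : quadPhase M L (2 • e) = 1 := by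
    have : (2 • e) ⬝ᵥ M *ᵥ (2 • e) + 2 * (L ⬝ᵥ 2 • e) = 4 * (e ⬝ᵥ M *ᵥ e + L ⬝ᵥ e) := by
      rw [mulVec_smul, smul_dotProduct, dotProduct_smul, dotProduct_smul, nsmul_eq_mul,
        nsmul_eq_mul, nsmul_eq_mul]
      push_cast
      ring
    rw [quadPhase, this, _root_.zpow_mul]
    norm_num [Complex.I_pow_four]
  rw [quadPhase_add hM, hfour, smul_dotProduct, nsmul_eq_mul, _root_.zpow_mul]
  norm_num

lemma quadPhase_liftVec_add (hM : M.IsSymm) (L : ι → ℤ) (x y : ι → ZMod 2) :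
    quadPhase M L (liftVec (x + y)) = quadPhase M L (liftVec x + liftVec y) := by
  rw [liftVec_add, quadPhase_add_two_smul hM]

end QuadraticPhase

section Kernel

variable {ι K : Type*} [Fintype ι] [Fintype K] [CommSemiring K]

open Classical in
noncomputable def leftKernel (Δ : Matrix ι ι K) : Finset (ι → K) :=
  univ.filter fun x => x ᵥ* Δ = 0

@[simp] lemma mem_leftKernel {Δ : Matrix ι ι K} {x : ι → K} : x ∈ leftKernel Δ ↔ x ᵥ* Δ = 0 := by
  simp [leftKernel]

end Kernel

section GaussSum

lemma norm_sum_sq_eq_norm_sum_correlation {G : Type*} [AddCommGroup G] [Fintype G] (g : G → ℂ) :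
    ‖∑ y, g y‖ ^ 2 = ‖∑ x, ∑ y, starRingEnd ℂ (g y) * g (y + x)‖ := by
  have hexpand : starRingEnd ℂ (∑ y, g y) * ∑ y, g y =
      ∑ x, ∑ y, starRingEnd ℂ (g y) * g (y + x) := by
    rw [map_sum, sum_mul_sum]
    conv_rhs => rw [sum_comm]
    refine sum_congr rfl fun y _ => ?_
    exact (Equiv.sum_comp (Equiv.addLeft y) fun z => starRingEnd ℂ (g y) * g z).symm
  rw [← hexpand, norm_mul, Complex.norm_conj, sq]

variable {ι : Type*} [Fintype ι]

lemma intCast_vecMul_liftVec (M : Matrix ι ι ℤ) (x : ι → ZMod 2) :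
    (fun j => ((liftVec x ᵥ* M) j : ZMod 2)) = x ᵥ* M.map (Int.cast : ℤ → ZMod 2) := by
  funext j
  have := RingHom.map_vecMul (Int.castRingHom (ZMod 2)) M (liftVec x) j
  simp only [eq_intCast] at this
  rw [this]
  congr 2
  funext i
  simp

variable [DecidableEq ι]

lemma sum_neg_one_zpow_dotProduct_liftVec_eq_zero (c : ι → ℤ)
    (hc : (fun j => (c j : ZMod 2)) ≠ 0) :
    ∑ y : ι → ZMod 2, (-1 : ℂ) ^ (c ⬝ᵥ liftVec y) = 0 := by
  obtain ⟨j, hj⟩ := Function.ne_iff.mp hc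
  have hodd : Odd (c j) := Int.not_even_iff_odd.mp (mt ZMod.intCast_eq_zero_iff_even.mpr hj)
  have hflip : ∀ y : ι → ZMod 2, (-1 : ℂ) ^ (c ⬝ᵥ liftVec (y + Pi.single j 1)) =
      -(-1) ^ (c ⬝ᵥ liftVec y) := by
    intro y
    have hsingle : liftVec (Pi.single j (1 : ZMod 2)) = Pi.single j 1 := by
      funext i
      rcases eq_or_ne i j with rfl | hi
      · simp only [liftVec, Pi.single_eq_same]
        rfl
      · simp [liftVec, hi]
    rw [← quadPhase_zero_left, ← quadPhase_zero_left, quadPhase_liftVec_add isSymm_zero,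
      quadPhase_add isSymm_zero, hsingle, quadPhase_zero_left c (Pi.single j 1), dotProduct_single,
      mul_one, hodd.neg_one_zpow, zero_mulVec, dotProduct_zero, zpow_zero]
    ring
  have hshift := Equiv.sum_comp (Equiv.addRight (Pi.single j 1 : ι → ZMod 2))
    fun y => (-1 : ℂ) ^ (c ⬝ᵥ liftVec y)
  simp only [Equiv.coe_addRight, hflip, sum_neg_distrib] at hshift
  exact CharZero.neg_eq_self_iff.mp hshift

variable {M : Matrix ι ι ℤ}

lemma sum_conj_quadPhase_mul_add (hM : M.IsSymm) (L : ι → ℤ) (x : ι → ZMod 2) :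
    ∑ y, starRingEnd ℂ (quadPhase M L (liftVec y)) * quadPhase M L (liftVec (y + x)) =
      quadPhase M L (liftVec x) * ∑ y, (-1) ^ ((liftVec x ᵥ* M) ⬝ᵥ liftVec y) := by
  rw [mul_sum]
  refine sum_congr rfl fun y _ => ?_
  rw [quadPhase_liftVec_add hM, quadPhase_add hM, ← mul_assoc, ← mul_assoc,
    Complex.conj_mul', norm_quadPhase, dotProduct_mulVec]
  simp

theorem norm_sum_quadPhase_sq_le (hM : M.IsSymm) (L : ι → ℤ) :
    ‖∑ y : ι → ZMod 2, quadPhase M L (liftVec y)‖ ^ 2 ≤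
      Fintype.card (ι → ZMod 2) * #(leftKernel (M.map (Int.cast : ℤ → ZMod 2))) := by
  have hcorr : ∀ x, ‖∑ y, starRingEnd ℂ (quadPhase M L (liftVec y)) *
      quadPhase M L (liftVec (y + x))‖ ≤
        if x ∈ leftKernel (M.map (Int.cast : ℤ → ZMod 2)) then
          (Fintype.card (ι → ZMod 2) : ℝ) else 0 := by
    intro x
    rw [sum_conj_quadPhase_mul_add hM, norm_mul, norm_quadPhase, one_mul]
    split_ifs with hx
    · exact (norm_sum_le _ _).trans_eq (by simp)
    · rw [mem_leftKernel, ← intCast_vecMul_liftVec] at hx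
      rw [sum_neg_one_zpow_dotProduct_liftVec_eq_zero _ hx, norm_zero]
  calc _ = _ := norm_sum_sq_eq_norm_sum_correlation _
    _ ≤ _ := norm_sum_le _ _
    _ ≤ _ := sum_le_sum fun x _ => hcorr x
    _ = _ := by rw [sum_ite_mem, univ_inter, sum_const, nsmul_eq_mul, mul_comm]

end GaussSum

section Codeword

variable {n : ℕ}

noncomputable def codeword (n : ℕ) (Q : Matrix (Fin n) (Fin n) (ZMod 2)) (ℓ : Fin n → ZMod 2) :
    EuclideanSpace ℂ (Fin n → ZMod 2) :=
  WithLp.toLp 2 (rmPhi n Q ℓ 0)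

lemma herm_eq_inner {ι : Type*} [Fintype ι] (u v : ι → ℂ) :
    herm u v = inner ℂ (WithLp.toLp 2 v) (WithLp.toLp 2 u) :=
  rfl

lemma rmPhi_zero_apply (Q : Matrix (Fin n) (Fin n) (ZMod 2)) (ℓ y : Fin n → ZMod 2) :
    rmPhi n Q ℓ 0 y =
      (Real.sqrt (2 ^ n) : ℂ)⁻¹ *
        quadPhase (Q.map fun a => (a.val : ℤ)) (liftVec ℓ) (liftVec y) := by
  simp [rmPhi, quadPhase, liftVec, dotProduct, mulVec, mul_sum, mul_assoc, mul_left_comm]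

lemma inner_codeword (Q Q' : Matrix (Fin n) (Fin n) (ZMod 2)) (ℓ ℓ' : Fin n → ZMod 2) :
    inner ℂ (codeword n Q ℓ) (codeword n Q' ℓ') =
      (2 ^ n : ℂ)⁻¹ * ∑ y, quadPhase (Q'.map (fun a => (a.val : ℤ)) - Q.map fun a => (a.val : ℤ))
        (liftVec ℓ' - liftVec ℓ) (liftVec y) := by
  have hscale : ((Real.sqrt (2 ^ n) : ℂ)⁻¹) * (Real.sqrt (2 ^ n) : ℂ)⁻¹ = (2 ^ n : ℂ)⁻¹ := by
    rw [← mul_inv, ← Complex.ofReal_mul, Real.mul_self_sqrt (by positivity)]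
    push_cast
    rfl
  rw [codeword, codeword, EuclideanSpace.inner_toLp_toLp, dotProduct, mul_sum]
  refine sum_congr rfl fun y _ => ?_
  rw [Pi.star_apply, rmPhi_zero_apply, rmPhi_zero_apply, ← conj_quadPhase_mul, ← hscale]
  simp only [Complex.star_def, map_mul, map_inv₀, Complex.conj_ofReal]
  ring

lemma orthonormal_codeword (Q : Matrix (Fin n) (Fin n) (ZMod 2)) :
    Orthonormal ℂ (codeword n Q) := by
  rw [orthonormal_iff_ite]
  intro ℓ ℓ'
  simp_rw [inner_codeword, sub_self, quadPhase_zero_left]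
  split_ifs with h
  · subst h
    simp
  · rw [sum_neg_one_zpow_dotProduct_liftVec_eq_zero, mul_zero]
    contrapose! h
    funext j
    exact (sub_eq_zero.mp (by simpa using congrFun h j)).symm

lemma norm_inner_codeword_sq_le {Q Q' : Matrix (Fin n) (Fin n) (ZMod 2)} (hQ : Q.IsSymm)
    (hQ' : Q'.IsSymm) (ℓ ℓ' : Fin n → ZMod 2) :
    ‖inner ℂ (codeword n Q ℓ) (codeword n Q' ℓ')‖ ^ 2 ≤ #(leftKernel (Q' - Q)) / 2 ^ n := by
  have hsymm : (Q'.map (fun a => (a.val : ℤ)) - Q.map fun a => (a.val : ℤ)).IsSymm :=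
    (hQ'.map _).sub (hQ.map _)
  have hreduce : (Q'.map (fun a => (a.val : ℤ)) - Q.map fun a => (a.val : ℤ)).map
      (Int.cast : ℤ → ZMod 2) = Q' - Q := by
    ext j k
    simp
  have hgauss := norm_sum_quadPhase_sq_le hsymm (liftVec ℓ' - liftVec ℓ)
  rw [hreduce, show Fintype.card (Fin n → ZMod 2) = 2 ^ n by simp] at hgauss
  rw [inner_codeword, norm_mul, mul_pow, norm_inv, norm_pow, Complex.norm_ofNat]
  calc _ ≤ ((2 : ℝ) ^ n)⁻¹ ^ 2 * (2 ^ n * (#(leftKernel (Q' - Q)) : ℝ)) := by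
        gcongr
        exact_mod_cast hgauss
    _ = (#(leftKernel (Q' - Q)) : ℝ) / 2 ^ n := by
        field_simp

end Codeword

section Hankel

variable {K : Type*} {n : ℕ}

def hankel (n : ℕ) (h : ℕ → K) : Matrix (Fin n) (Fin n) K :=
  Matrix.of fun j k => h (j + k)

@[simp] lemma hankel_apply (h : ℕ → K) (j k : Fin n) : hankel n h j k = h (j + k) :=
  rfl

lemma isSymm_hankel (h : ℕ → K) : (hankel n h).IsSymm :=
  IsSymm.ext fun j k => by simp [add_comm]

lemma hankel_sub [Sub K] (h₁ h₂ : ℕ → K) : hankel n h₁ - hankel n h₂ = hankel n (h₁ - h₂) :=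
  rfl

lemma mem_range_hankel [Zero K] {Δ : Matrix (Fin n) (Fin n) K}
    (hΔ : ∀ j k j' k' : Fin n, (j : ℕ) + k = j' + k' → Δ j k = Δ j' k') :
    Δ ∈ Set.range (hankel n) := by
  classical
  refine ⟨fun d => if hd : ∃ p : Fin n × Fin n, (p.1 : ℕ) + p.2 = d
    then Δ hd.choose.1 hd.choose.2 else 0, ?_⟩
  ext j k
  have hex : ∃ p : Fin n × Fin n, (p.1 : ℕ) + p.2 = j + k := ⟨(j, k), rfl⟩
  simp only [hankel_apply, dif_pos hex]
  exact hΔ _ _ _ _ hex.choose_spec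

lemma hankel_submatrix_rev (h : ℕ → K) :
    (hankel n h).submatrix Fin.rev Fin.rev = hankel n fun d => h (2 * n - 2 - d) := by
  ext j k
  simp only [submatrix_apply, hankel_apply, Fin.val_rev]
  congr 1
  omega

lemma hankel_eq_zero [Zero K] {h : ℕ → K} (hlo : ∀ d < n, h d = 0)
    (hhi : ∀ d < n, h (2 * n - 2 - d) = 0) : hankel n h = 0 := by
  ext j k
  rw [hankel_apply, Matrix.zero_apply]
  by_cases hjk : (j : ℕ) + k < n
  · exact hlo _ hjk
  · have := hhi (2 * n - 2 - (j + k)) (by omega)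
    rwa [show 2 * n - 2 - (2 * n - 2 - (j + k)) = j + k by omega] at this

/-- A kernel vector supported on the first `R` coordinates is a linear recurrence of order
`< R` for the sequence, so the sequence vanishes once its first `R` terms do. -/
theorem hankel_seq_eq_zero_of_vecMul_eq_zero [Semiring K] [NoZeroDivisors K] {R : ℕ}
    {h : ℕ → K} {x : Fin n → K} (hx : x ≠ 0) (hxR : ∀ i : Fin n, R ≤ i → x i = 0)
    (hker : x ᵥ* hankel n h = 0) (hR : ∀ d < R, h d = 0) : ∀ d < n, h d = 0 := by
  classical
  obtain ⟨I, hI, hImax⟩ := (univ.filter fun i => x i ≠ 0).exists_max_image (fun i => (i : ℕ))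
    (by simpa [Finset.Nonempty, Function.ne_iff] using hx)
  simp only [mem_filter, mem_univ, true_and] at hI hImax
  have hIR : (I : ℕ) < R := by
    by_contra hRI
    exact hI (hxR I (not_lt.mp hRI))
  intro d
  induction d using Nat.strong_induction_on with
  | _ d ih =>
    intro hd
    by_cases hdR : d < R
    · exact hR d hdR
    have hcol := congrFun hker ⟨d - I, by omega⟩
    rw [vecMul, dotProduct, sum_eq_single I] at hcol
    · simpa [hI, show (I : ℕ) + (d - I) = d by omega] using hcol
    · intro i _ hiI
      rcases lt_or_gt_of_ne (Fin.val_ne_of_ne hiI) with hlt | hgt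
      · simp [ih (i + (d - I)) (by omega) (by omega)]
      · simp [not_not.mp (mt (hImax i) (not_le.mpr hgt))]
    · simp

noncomputable def hankelEnds [Nonempty K] (n R : ℕ) (Δ : Matrix (Fin n) (Fin n) K) :
    (Fin R → K) × (Fin R → K) :=
  let h := Function.invFun (hankel n) Δ
  (fun i => h i, fun i => h (2 * n - 2 - i))

lemma exists_hankel_sub_of_hankelEnds_eq [AddGroup K] {R : ℕ}
    {Δ₁ Δ₂ : Matrix (Fin n) (Fin n) K}
    (h₁ : Δ₁ ∈ Set.range (hankel n)) (h₂ : Δ₂ ∈ Set.range (hankel n))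
    (hends : hankelEnds n R Δ₁ = hankelEnds n R Δ₂) :
    ∃ h : ℕ → K, Δ₁ - Δ₂ = hankel n h ∧ (∀ d < R, h d = 0) ∧ ∀ d < R, h (2 * n - 2 - d) = 0 := by
  refine ⟨Function.invFun (hankel n) Δ₁ - Function.invFun (hankel n) Δ₂, ?_, fun d hd => ?_,
    fun d hd => ?_⟩
  · rw [← hankel_sub, Function.invFun_eq h₁, Function.invFun_eq h₂]
  · simpa [hankelEnds, sub_eq_zero] using congrFun (congrArg Prod.fst hends) ⟨d, hd⟩
  · simpa [hankelEnds, sub_eq_zero] using congrFun (congrArg Prod.snd hends) ⟨d, hd⟩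

lemma hankelEnds_injOn_of_le [AddGroup K] {R : ℕ} (hnR : n ≤ R) :
    Set.InjOn (hankelEnds (K := K) n R) (Set.range (hankel n)) := by
  intro Δ₁ h₁ Δ₂ h₂ hends
  obtain ⟨h, hsub, hlo, hhi⟩ := exists_hankel_sub_of_hankelEnds_eq h₁ h₂ hends
  rw [← sub_eq_zero, hsub]
  exact hankel_eq_zero (fun d hd => hlo d (by omega)) fun d hd => hhi d (by omega)

lemma vecMul_hankel_rev_eq_zero [NonUnitalNonAssocSemiring K] {h : ℕ → K} {y : Fin n → K}
    (hy : (y ∘ Fin.rev) ᵥ* hankel n h = 0) : y ᵥ* hankel n (fun d => h (2 * n - 2 - d)) = 0 := by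
  rw [← hankel_submatrix_rev, show (Fin.rev : Fin n → Fin n) = Fin.revPerm from rfl,
    submatrix_vecMul_equiv, Fin.revPerm_symm, show y ∘ Fin.revPerm = y ∘ Fin.rev from rfl, hy]
  rfl

/-- Two kernel vectors, supported on the first and on the last `R` coordinates, give recurrences
running forwards and backwards, which recover the whole sequence from its two ends. -/
lemma hankelEnds_injOn [Ring K] [NoZeroDivisors K] {R : ℕ} {x y : Fin n → K} (hx : x ≠ 0)
    (hy : y ≠ 0) (hxR : ∀ i : Fin n, R ≤ i → x i = 0) (hyR : ∀ i : Fin n, R ≤ i → y i = 0) :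
    Set.InjOn (hankelEnds n R)
      {Δ | Δ ∈ Set.range (hankel n) ∧ x ᵥ* Δ = 0 ∧ (y ∘ Fin.rev) ᵥ* Δ = 0} := by
  rintro Δ₁ ⟨h₁, hx₁, hy₁⟩ Δ₂ ⟨h₂, hx₂, hy₂⟩ hends
  obtain ⟨h, hsub, hlo, hhi⟩ := exists_hankel_sub_of_hankelEnds_eq h₁ h₂ hends
  have hxh : x ᵥ* hankel n h = 0 := by rw [← hsub, vecMul_sub, hx₁, hx₂, sub_zero]
  have hyh : (y ∘ Fin.rev) ᵥ* hankel n h = 0 := by rw [← hsub, vecMul_sub, hy₁, hy₂, sub_zero]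
  rw [← sub_eq_zero, hsub]
  exact hankel_eq_zero (hankel_seq_eq_zero_of_vecMul_eq_zero hx hxR hxh hlo)
    (hankel_seq_eq_zero_of_vecMul_eq_zero hy hyR (vecMul_hankel_rev_eq_zero hyh) hhi)

end Hankel

section LargeKernel

lemma Submodule.exists_mem_inf_ne_zero_of_card_lt {R M : Type*} [Ring R] [AddCommGroup M]
    [Module R M] [Finite M] (p q : Submodule R M) (hcard : Nat.card M < Nat.card p * Nat.card q) :
    ∃ x ∈ p, x ∈ q ∧ x ≠ 0 := by
  by_contra! hdisj
  have hinj := AddSubgroup.add_injective_of_disjoint (H₁ := p.toAddSubgroup)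
    (H₂ := q.toAddSubgroup) (AddSubgroup.disjoint_def.mpr fun hp hq => hdisj _ hp hq)
  have := Nat.card_le_card_of_injective _ hinj
  rw [Nat.card_prod] at this
  exact absurd hcard (not_lt.mpr this)

lemma extendByZero_castLE_apply_of_le {K : Type*} [Semiring K] {n R : ℕ} (hRn : R ≤ n)
    (c : Fin R → K) {i : Fin n} (hi : R ≤ i) :
    Function.ExtendByZero.linearMap K (Fin.castLE hRn) c i = 0 := by
  refine Function.extend_apply' _ _ _ ?_
  rintro ⟨a, rfl⟩
  have := a.isLt
  simp only [Fin.val_castLE] at hi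
  omega

variable {K : Type*} [Field K] [Fintype K]

lemma exists_ne_zero_vecMul_eq_zero {ι ι' : Type*} [Fintype ι] [DecidableEq ι] [Fintype ι']
    [DecidableEq ι']
    (g : (ι' → K) →ₗ[K] ι → K) (hg : Function.Injective g) (Δ : Matrix ι ι K)
    (hcard : Fintype.card K ^ Fintype.card ι <
      #(leftKernel Δ) * Fintype.card K ^ Fintype.card ι') :
    ∃ c, g c ≠ 0 ∧ g c ᵥ* Δ = 0 := by
  have hrange : Nat.card (LinearMap.range g) = Fintype.card K ^ Fintype.card ι' := by
    rw [← Nat.card_congr (LinearEquiv.ofInjective g hg).toEquiv, Nat.card_eq_fintype_card,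
      Fintype.card_fun]
  have hker : Nat.card (LinearMap.ker Δ.vecMulLinear) = #(leftKernel Δ) := by
    rw [← Fintype.card_coe, ← Nat.card_eq_fintype_card]
    exact Nat.card_congr (Equiv.subtypeEquivRight fun x => by simp)
  obtain ⟨_, ⟨c, rfl⟩, hc, hne⟩ := Submodule.exists_mem_inf_ne_zero_of_card_lt
    (LinearMap.range g) (LinearMap.ker Δ.vecMulLinear)
    (by rwa [hrange, hker, mul_comm, Nat.card_eq_fintype_card, Fintype.card_fun])
  exact ⟨c, hne, hc⟩

lemma exists_extendByZero_castLE_vecMul_eq_zero {n R : ℕ} (hRn : R ≤ n)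
    {Δ : Matrix (Fin n) (Fin n) K}
    (hcard : Fintype.card K ^ n < #(leftKernel Δ) * Fintype.card K ^ R) :
    ∃ c : (Fin R → K) × (Fin R → K),
      Function.ExtendByZero.linearMap K (Fin.castLE hRn) c.1 ≠ 0 ∧
      Function.ExtendByZero.linearMap K (Fin.castLE hRn) c.2 ≠ 0 ∧
      Function.ExtendByZero.linearMap K (Fin.castLE hRn) c.1 ᵥ* Δ = 0 ∧
      (Function.ExtendByZero.linearMap K (Fin.castLE hRn) c.2 ∘ Fin.rev) ᵥ* Δ = 0 := by
  classical
  set E := Function.ExtendByZero.linearMap K (Fin.castLE hRn)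
  have hE : Function.Injective E := Function.extend_injective (Fin.castLE_injective hRn) 0
  have hE' : Function.Injective (LinearMap.funLeft K K Fin.rev ∘ₗ E) :=
    (LinearMap.funLeft_injective_of_surjective K K _ Fin.rev_surjective).comp hE
  replace hcard : Fintype.card K ^ Fintype.card (Fin n) <
      #(leftKernel Δ) * Fintype.card K ^ Fintype.card (Fin R) := by
    simpa using hcard
  obtain ⟨c, hc0, hc⟩ := exists_ne_zero_vecMul_eq_zero E hE Δ hcard
  obtain ⟨c', hc'0, hc'⟩ := exists_ne_zero_vecMul_eq_zero _ hE' Δ hcard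
  exact ⟨(c, c'), hc0, fun h0 => hc'0 (by simp [h0]), hc, hc'⟩

variable (K) in
open Classical in
noncomputable def largeKernelHankel (n R : ℕ) : Finset (Matrix (Fin n) (Fin n) K) :=
  univ.filter fun Δ => Δ ∈ Set.range (hankel n) ∧
    Fintype.card K ^ n < #(leftKernel Δ) * Fintype.card K ^ R

theorem card_largeKernelHankel_le (n R : ℕ) :
    #(largeKernelHankel K n R) ≤ Fintype.card K ^ (4 * R) := by
  classical
  have hends_card : Fintype.card ((Fin R → K) × (Fin R → K)) = Fintype.card K ^ (2 * R) := by
    simp [Fintype.card_prod, two_mul, pow_add]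
  have hmem : ∀ Δ ∈ largeKernelHankel K n R, Δ ∈ Set.range (hankel n) ∧
      Fintype.card K ^ n < #(leftKernel Δ) * Fintype.card K ^ R := by
    intro Δ hΔ
    simpa [largeKernelHankel] using hΔ
  by_cases hRn : R ≤ n
  swap
  · calc #(largeKernelHankel K n R) ≤ Fintype.card ((Fin R → K) × (Fin R → K)) :=
          card_le_card_of_injOn _ (fun _ _ => mem_coe.mpr (mem_univ _))
            ((hankelEnds_injOn_of_le (by omega)).mono fun Δ hΔ => (hmem Δ hΔ).1)
      _ ≤ Fintype.card K ^ (4 * R) := by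
          rw [hends_card]
          exact Nat.pow_le_pow_right Fintype.card_pos (by omega)
  set E := Function.ExtendByZero.linearMap K (Fin.castLE hRn)
  set I := univ.filter fun c : (Fin R → K) × (Fin R → K) => E c.1 ≠ 0 ∧ E c.2 ≠ 0
  let S : (Fin R → K) × (Fin R → K) → Finset (Matrix (Fin n) (Fin n) K) := fun c =>
    (largeKernelHankel K n R).filter fun Δ => E c.1 ᵥ* Δ = 0 ∧ (E c.2 ∘ Fin.rev) ᵥ* Δ = 0
  have hcover : largeKernelHankel K n R ⊆ I.biUnion S := by
    intro Δ hΔ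
    obtain ⟨c, hc₁, hc₂, hx, hy⟩ := exists_extendByZero_castLE_vecMul_eq_zero hRn (hmem Δ hΔ).2
    exact mem_biUnion.mpr ⟨c, mem_filter.mpr ⟨mem_univ _, hc₁, hc₂⟩, mem_filter.mpr ⟨hΔ, hx, hy⟩⟩
  have hS : ∀ c ∈ I, #(S c) ≤ Fintype.card K ^ (2 * R) := by
    intro c hc
    obtain ⟨hc₁, hc₂⟩ := (mem_filter.mp hc).2
    rw [← hends_card]
    refine card_le_card_of_injOn (hankelEnds n R) (fun _ _ => mem_coe.mpr (mem_univ _)) ?_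
    refine (hankelEnds_injOn hc₁ hc₂ (fun i => extendByZero_castLE_apply_of_le hRn _)
      (fun i => extendByZero_castLE_apply_of_le hRn _)).mono fun Δ hΔ => ?_
    obtain ⟨hΔ, hx, hy⟩ := mem_filter.mp hΔ
    exact ⟨(hmem Δ hΔ).1, hx, hy⟩
  calc #(largeKernelHankel K n R) ≤ _ := card_le_card hcover
    _ ≤ _ := card_biUnion_le
    _ ≤ ∑ _c : (Fin R → K) × (Fin R → K), Fintype.card K ^ (2 * R) :=
        (sum_le_sum hS).trans (sum_le_sum_of_subset (filter_subset _ _))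
    _ = Fintype.card K ^ (4 * R) := by
        rw [sum_const, card_univ, hends_card, smul_eq_mul, ← pow_add]
        ring_nf

end LargeKernel

section HeavyCoefficients

variable {E : Type*} [NormedAddCommGroup E] [InnerProductSpace ℂ E]

lemma Orthonormal.card_le_of_heavy {ι : Type*} {v : ι → E} (hv : Orthonormal ℂ v)
    (F : Finset ι) {x : E} (hx : x ≠ 0) {k : ℝ} (hk : 0 < k)
    (hheavy : ∀ i ∈ F, 1 / k * ‖x‖ ^ 2 ≤ ‖inner ℂ (v i) x‖ ^ 2) : (#F : ℝ) ≤ k := by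
  have hbessel : #F * (1 / k * ‖x‖ ^ 2) ≤ ‖x‖ ^ 2 := by
    simpa using (card_nsmul_le_sum F _ _ hheavy).trans (hv.sum_inner_products_le x)
  rwa [← mul_assoc, mul_le_iff_le_one_left (by positivity), mul_one_div, div_le_one hk]
    at hbessel

lemma norm_sum_smul_sq_le {ι : Type*} (T : Finset ι) (a : ι → ℂ) (φ : ι → E) :
    ‖∑ t ∈ T, a t • φ t‖ ^ 2 ≤
      ∑ t ∈ T, ∑ t' ∈ T, ‖a t‖ * ‖a t'‖ * ‖inner ℂ (φ t) (φ t')‖ := by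
  have hexpand : inner ℂ (∑ t ∈ T, a t • φ t) (∑ t ∈ T, a t • φ t) =
      ∑ t ∈ T, ∑ t' ∈ T, starRingEnd ℂ (a t) * a t' * inner ℂ (φ t) (φ t') := by
    rw [sum_inner]
    refine sum_congr rfl fun t _ => ?_
    rw [inner_smul_left, inner_sum, mul_sum]
    refine sum_congr rfl fun t' _ => ?_
    rw [inner_smul_right, mul_assoc]
  have hnorm : ‖∑ t ∈ T, a t • φ t‖ ^ 2 = ‖inner ℂ (∑ t ∈ T, a t • φ t) (∑ t ∈ T, a t • φ t)‖ := by
    simp [inner_self_eq_norm_sq_to_K]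
  rw [hnorm, hexpand]
  refine (norm_sum_le _ _).trans (sum_le_sum fun t _ => (norm_sum_le _ _).trans_eq ?_)
  simp only [norm_mul, Complex.norm_conj]

/-- Correlate `x` with `v = ∑ ⟪φ t, x⟫ • φ t`: heaviness gives `⟪v, x⟫ ≥ #T ‖x‖² / k`, while
`‖v‖²` is controlled by the pairwise correlations of the family. -/
theorem sq_card_div_le_sum_norm_inner {ι : Type*} (T : Finset ι) (φ : ι → E)
    (hφ : ∀ t ∈ T, ‖φ t‖ ≤ 1) {x : E} (hx : x ≠ 0) {k : ℝ} (hk : 0 < k)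
    (hheavy : ∀ t ∈ T, 1 / k * ‖x‖ ^ 2 ≤ ‖inner ℂ (φ t) x‖ ^ 2) :
    (#T / k) ^ 2 ≤ ∑ t ∈ T, ∑ t' ∈ T, ‖inner ℂ (φ t) (φ t')‖ := by
  set v : E := ∑ t ∈ T, inner ℂ (φ t) x • φ t with hv_def
  set A : ℝ := ∑ t ∈ T, ‖inner ℂ (φ t) x‖ ^ 2 with hA_def
  set C : ℝ := ∑ t ∈ T, ∑ t' ∈ T, ‖inner ℂ (φ t) (φ t')‖ with hC_def
  have hA : #T / k * ‖x‖ ^ 2 ≤ A := by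
    have := card_nsmul_le_sum T _ _ hheavy
    rwa [nsmul_eq_mul, ← mul_assoc, mul_one_div] at this
  have hvx : A ≤ ‖v‖ * ‖x‖ := by
    have hinner : inner ℂ v x = (A : ℂ) := by
      rw [hv_def, hA_def, sum_inner]
      push_cast
      exact sum_congr rfl fun t _ => by rw [inner_smul_left, Complex.conj_mul']
    calc A = ‖(A : ℂ)‖ := (Complex.norm_of_nonneg (sum_nonneg fun t _ => by positivity)).symm
      _ ≤ ‖v‖ * ‖x‖ := hinner ▸ norm_inner_le_norm v x
  have hv : ‖v‖ ^ 2 ≤ ‖x‖ ^ 2 * C := by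
    have hcoef : ∀ t ∈ T, ‖inner ℂ (φ t) x‖ ≤ ‖x‖ := fun t ht =>
      (norm_inner_le_norm _ _).trans (mul_le_of_le_one_left (norm_nonneg _) (hφ t ht))
    refine (norm_sum_smul_sq_le T _ φ).trans ?_
    rw [hC_def]
    simp_rw [mul_sum]
    gcongr with t ht t' ht'
    rw [sq]
    gcongr
    exacts [hcoef t ht, hcoef t' ht']
  have hkey : (#T / k) ^ 2 * (‖x‖ ^ 2) ^ 2 ≤ C * (‖x‖ ^ 2) ^ 2 := by
    calc (#T / k) ^ 2 * (‖x‖ ^ 2) ^ 2 = (#T / k * ‖x‖ ^ 2) ^ 2 := by ring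
      _ ≤ (‖v‖ * ‖x‖) ^ 2 := pow_le_pow_left₀ (by positivity) (hA.trans hvx) 2
      _ = ‖v‖ ^ 2 * ‖x‖ ^ 2 := by ring
      _ ≤ C * (‖x‖ ^ 2) ^ 2 := by nlinarith [hv]
  exact le_of_mul_le_mul_right hkey (by positivity)

end HeavyCoefficients

section HeavyCount

variable {E : Type*} [NormedAddCommGroup E] [InnerProductSpace ℂ E] {A B : Type*}
  {φ : A × B → E} {T : Finset (A × B)} {x : E} {k : ℝ}

lemma card_filter_fst_eq_le_of_heavy [DecidableEq A] (hφ : ∀ P, Orthonormal ℂ fun ℓ => φ (P, ℓ))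
    (hx : x ≠ 0) (hk : 0 < k) (hheavy : ∀ t ∈ T, 1 / k * ‖x‖ ^ 2 ≤ ‖inner ℂ (φ t) x‖ ^ 2)
    (P : A) : (#(T.filter fun t => t.1 = P) : ℝ) ≤ k := by
  classical
  have hinj : Set.InjOn Prod.snd (T.filter fun t => t.1 = P : Set (A × B)) := by
    intro t ht t' ht' h
    simp only [coe_filter, Set.mem_ofPred_eq] at ht ht'
    exact Prod.ext (ht.2.trans ht'.2.symm) h
  rw [← card_image_of_injOn hinj]
  refine (hφ P).card_le_of_heavy _ hx hk fun ℓ hℓ => ?_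
  obtain ⟨t, ht, rfl⟩ := mem_image.mp hℓ
  obtain ⟨htT, rfl⟩ := mem_filter.mp ht
  exact hheavy t htT

/-- In the row of `t`, the `t'` whose first coordinate differs from that of `t` by an element of
`Low` lie in at most `#Low` slices, each holding at most `k` elements of `T`; all other `t'` are
`ε`-correlated with `t`. -/
theorem card_mul_sub_le_of_orthonormal_slices [AddGroup A]
    (hφ : ∀ P, Orthonormal ℂ fun ℓ => φ (P, ℓ))
    (Low : Finset A) {ε : ℝ} (hx : x ≠ 0) (hk : 0 < k) (hε : 0 ≤ ε)
    (hheavy : ∀ t ∈ T, 1 / k * ‖x‖ ^ 2 ≤ ‖inner ℂ (φ t) x‖ ^ 2)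
    (hsmall : ∀ t ∈ T, ∀ t' ∈ T, t'.1 - t.1 ∉ Low → ‖inner ℂ (φ t) (φ t')‖ ≤ ε) :
    #T * (1 / k ^ 2 - ε) ≤ #Low * k := by
  classical
  have hunit : ∀ t : A × B, ‖φ t‖ = 1 := fun t => (hφ t.1).1 t.2
  have hrow : ∀ t ∈ T, ∑ t' ∈ T, ‖inner ℂ (φ t) (φ t')‖ ≤ #T * ε + #Low * k := by
    intro t ht
    rw [← sum_filter_not_add_sum_filter T fun t' => t'.1 - t.1 ∈ Low]
    gcongr
    · calc ∑ t' ∈ T.filter (fun t' => t'.1 - t.1 ∉ Low), ‖inner ℂ (φ t) (φ t')‖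
          ≤ ∑ _t' ∈ T.filter (fun t' => t'.1 - t.1 ∉ Low), ε :=
            sum_le_sum fun t' ht' => hsmall t ht t' (mem_filter.mp ht').1 (mem_filter.mp ht').2
        _ ≤ #T * ε := by
            rw [sum_const, nsmul_eq_mul]
            exact mul_le_mul_of_nonneg_right (by exact_mod_cast card_filter_le _ _) hε
    · have hcover : T.filter (fun t' => t'.1 - t.1 ∈ Low) ⊆
          Low.biUnion fun Δ => T.filter fun t' => t'.1 = Δ + t.1 := by
        intro t' ht'
        obtain ⟨ht'T, hΔ⟩ := mem_filter.mp ht'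
        exact mem_biUnion.mpr ⟨t'.1 - t.1, hΔ, mem_filter.mpr ⟨ht'T, (sub_add_cancel _ _).symm⟩⟩
      calc ∑ t' ∈ T.filter (fun t' => t'.1 - t.1 ∈ Low), ‖inner ℂ (φ t) (φ t')‖
          ≤ ∑ _t' ∈ T.filter (fun t' => t'.1 - t.1 ∈ Low), (1 : ℝ) :=
            sum_le_sum fun t' _ => (norm_inner_le_norm _ _).trans (by rw [hunit, hunit, one_mul])
        _ ≤ ∑ Δ ∈ Low, (#(T.filter fun t' => t'.1 = Δ + t.1) : ℝ) := by
            rw [sum_const, nsmul_one]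
            exact_mod_cast (card_le_card hcover).trans card_biUnion_le
        _ ≤ #Low * k := by
            rw [← nsmul_eq_mul, ← sum_const]
            exact sum_le_sum fun Δ _ => card_filter_fst_eq_le_of_heavy hφ hx hk hheavy _
  have hcorr := (sq_card_div_le_sum_norm_inner T φ (fun t _ => (hunit t).le) hx hk hheavy).trans
    (sum_le_sum hrow)
  rw [sum_const, nsmul_eq_mul] at hcorr
  rcases (Nat.cast_nonneg (α := ℝ) #T).eq_or_lt with hT | hT
  · rw [← hT, zero_mul]
    positivity
  · refine le_of_mul_le_mul_left ?_ hT
    calc (#T : ℝ) * (#T * (1 / k ^ 2 - ε)) = (#T / k) ^ 2 - #T * (#T * ε) := by field_simp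
      _ ≤ #T * (#Low * k) := by linarith

end HeavyCount

section HankelCode

variable {n R : ℕ} {k : ℝ}

lemma norm_inner_codeword_le_of_not_mem_largeKernelHankel (hk : 0 < k) (hR : 4 * k ^ 4 ≤ 2 ^ R)
    {P P' : Matrix (Fin n) (Fin n) (ZMod 2)} (hP : P ∈ Set.range (hankel n))
    (hP' : P' ∈ Set.range (hankel n)) (hlarge : P' - P ∉ largeKernelHankel (ZMod 2) n R)
    (ℓ ℓ' : Fin n → ZMod 2) :
    ‖inner ℂ (codeword n P ℓ) (codeword n P' ℓ')‖ ≤ 1 / (2 * k ^ 2) := by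
  obtain ⟨h, rfl⟩ := hP
  obtain ⟨h', rfl⟩ := hP'
  have hker : (#(leftKernel (hankel n h' - hankel n h)) : ℝ) * (4 * k ^ 4) ≤ 2 ^ n := by
    have : #(leftKernel (hankel n h' - hankel n h)) * 2 ^ R ≤ 2 ^ n := by
      simpa [largeKernelHankel, hankel_sub] using hlarge
    exact (mul_le_mul_of_nonneg_left hR (Nat.cast_nonneg _)).trans (by exact_mod_cast this)
  rw [← pow_le_pow_iff_left₀ (norm_nonneg _) (by positivity) two_ne_zero]
  refine (norm_inner_codeword_sq_le (isSymm_hankel h) (isSymm_hankel h') ℓ ℓ').trans ?_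
  rw [div_le_iff₀ (by positivity)]
  field_simp
  linarith

theorem card_heavy_hankel_codewords_le (hk : 0 < k) (hR : 4 * k ^ 4 ≤ 2 ^ R)
    {x : EuclideanSpace ℂ (Fin n → ZMod 2)} (hx : x ≠ 0) :
    (Nat.card {Pl : Matrix (Fin n) (Fin n) (ZMod 2) × (Fin n → ZMod 2) //
      Pl.1 ∈ Set.range (hankel n) ∧ 1 / k * ‖x‖ ^ 2 ≤ ‖inner ℂ (codeword n Pl.1 Pl.2) x‖ ^ 2} : ℝ)
      ≤ 2 * k ^ 3 * 2 ^ (4 * R) := by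
  classical
  rw [Nat.card_eq_fintype_card, Fintype.card_subtype]
  set T := univ.filter fun Pl : Matrix (Fin n) (Fin n) (ZMod 2) × (Fin n → ZMod 2) =>
    Pl.1 ∈ Set.range (hankel n) ∧ 1 / k * ‖x‖ ^ 2 ≤ ‖inner ℂ (codeword n Pl.1 Pl.2) x‖ ^ 2
  have hcount := card_mul_sub_le_of_orthonormal_slices (φ := fun t => codeword n t.1 t.2)
    (T := T) (ε := 1 / (2 * k ^ 2)) orthonormal_codeword (largeKernelHankel (ZMod 2) n R) hx hk
    (by positivity) (fun t ht => (mem_filter.mp ht).2.2) fun t ht t' ht' hlarge =>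
      norm_inner_codeword_le_of_not_mem_largeKernelHankel hk hR (mem_filter.mp ht).2.1
        (mem_filter.mp ht').2.1 hlarge t.2 t'.2
  have hlow : (#(largeKernelHankel (ZMod 2) n R) : ℝ) ≤ 2 ^ (4 * R) := by
    exact_mod_cast (ZMod.card 2 ▸ card_largeKernelHankel_le n R :)
  rw [show 1 / k ^ 2 - 1 / (2 * k ^ 2) = 1 / (2 * k ^ 2) by field_simp; ring, mul_one_div,
    div_le_iff₀ (by positivity)] at hcount
  calc (#T : ℝ) ≤ #(largeKernelHankel (ZMod 2) n R) * k * (2 * k ^ 2) := hcount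
    _ ≤ 2 ^ (4 * R) * k * (2 * k ^ 2) := by gcongr
    _ = 2 * k ^ 3 * 2 ^ (4 * R) := by ring

end HankelCode

/-- There are absolute constants C > 0 and c > 0 such that for every
n ≥ 1, every real k ≥ 1 and every nonzero signal s ∈ ℂ^N (N = 2ⁿ), the number of
Hankel codewords heavy for s — pairs (P, ℓ) with P an n×n Hankel matrix over ℤ₂ and
ℓ ∈ ℤ₂ⁿ such that |⟨s, φ_{P,ℓ,0}⟩|² ≥ (1/k)·‖s‖² — is at most C·k^c. -/
theorem stmt_19 :
    ∃ C c : ℝ, 0 < C ∧ 0 < c ∧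
      ∀ (n : ℕ), 1 ≤ n → ∀ k : ℝ, 1 ≤ k →
        ∀ s : (Fin n → ZMod 2) → ℂ, s ≠ 0 →
          (Nat.card {Pl : Matrix (Fin n) (Fin n) (ZMod 2) × (Fin n → ZMod 2) //
              (∀ j k' j' k'' : Fin n, (j : ℕ) + (k' : ℕ) = (j' : ℕ) + (k'' : ℕ) →
                Pl.1 j k' = Pl.1 j' k'')
              ∧ (1 / k) * (∑ y : Fin n → ZMod 2, ‖s y‖ ^ 2)
                  ≤ ‖herm s (rmPhi n Pl.1 Pl.2 0)‖ ^ 2} : ℝ)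
            ≤ C * k ^ c := by
  refine ⟨8192, 19, by norm_num, by norm_num, fun n _ k hk s hs => ?_⟩
  obtain ⟨m, hm_le, hm_lt⟩ := exists_nat_pow_near (x := 4 * k ^ 4)
    (by nlinarith [one_le_pow₀ (n := 4) hk]) one_lt_two
  have hheavy := card_heavy_hankel_codewords_le (one_pos.trans_le hk) hm_lt.le
    (x := WithLp.toLp 2 s) (by simpa using hs)
  have h2R : (2 : ℝ) ^ (m + 1) ≤ 8 * k ^ 4 := by rw [pow_succ]; linarith
  rw [Real.rpow_ofNat]
  calc _ ≤ (Nat.card {Pl : Matrix (Fin n) (Fin n) (ZMod 2) × (Fin n → ZMod 2) //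
          Pl.1 ∈ Set.range (hankel n) ∧ 1 / k * ‖WithLp.toLp 2 s‖ ^ 2 ≤
            ‖inner ℂ (codeword n Pl.1 Pl.2) (WithLp.toLp 2 s)‖ ^ 2} : ℝ) := by
        refine Nat.cast_le.mpr (Nat.card_le_card_of_injective _
          (Subtype.impEmbedding _ _ fun Pl hPl => ⟨mem_range_hankel hPl.1, ?_⟩).injective)
        simpa [EuclideanSpace.norm_sq_eq, herm_eq_inner, codeword] using hPl.2
    _ ≤ 2 * k ^ 3 * ((2 : ℝ) ^ (m + 1)) ^ 4 := by rwa [← pow_mul, mul_comm (m + 1)]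
    _ ≤ 2 * k ^ 3 * (8 * k ^ 4) ^ 4 := by gcongr
    _ = 8192 * k ^ 19 := by ring
end
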